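/- arXiv:2602.06809 — 8 statements merged into one kernel-verified Lean document; each statement's English description precedes it below -/
import Mathlib

section
/- Let γ: ℝ≥0 → ℝ≥0 be measurable with ∫₀^∞ γ(a)da = 1 and γ(a) ≤ β̄ e^{-μ̲ a} (β̄, μ̲ > 0). Let f: ℝ≥0 → ℝ≥0 be continuous, increasing, with fixed-point set {0, κ₁, κ₂} (0 < κ₁ < κ₂), f(x) > x on (κ₁,κ₂), f(x) < x on (0,κ₁) ∪ (κ₂,∞). If B: ℝ≥0 → ℝ≥0 is a bounded continuous solution of B(t) = σ(t) + ∫₀^t γ(a)f(B(t-a))da with 0 ≤ σ(t) ≤ β̄ e^{-μ̲ t}‖u₀‖, then B* := limsup_{t→∞} B(t) satisfies B* ≤ f(B*), and hence B* ∈ {0} ∪ [κ₁, κ₂]. -/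
open MeasureTheory Real Set Filter Topology

/-- Auxiliary: real version of `le_of_forall_pos_le_add`. -/
lemma real_le_of_forall_pos_le_add {a b : ℝ} (h : ∀ ε : ℝ, 0 < ε → a ≤ b + ε) : a ≤ b := by
  by_contra hab
  push_neg at hab
  have := h ((a - b) / 2) (by linarith)
  linarith

/-- the limsup of a bounded solution of the Volterra equation satisfies
`B* ≤ f(B*)`, hence `B* ∈ {0} ∪ [κ₁, κ₂]`. -/
theorem volterra_limsup_classification
    (γ : ℝ → ℝ) (βbar μlow : ℝ) (hβbar : 0 < βbar) (hμlow : 0 < μlow)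
    (hγmeas : Measurable γ) (hγpos : ∀ a, 0 ≤ γ a)
    (hγint : ∫ a in Ioi (0:ℝ), γ a = 1)
    (hγbdd : ∀ a : ℝ, 0 ≤ a → γ a ≤ βbar * exp (-μlow * a))
    (f : ℝ → ℝ) (hfcont : Continuous f) (hfmono : MonotoneOn f (Ici 0))
    (hfpos : ∀ x, 0 ≤ x → 0 ≤ f x)
    (κ₁ κ₂ : ℝ) (hκ₁ : 0 < κ₁) (hκ₁₂ : κ₁ < κ₂)
    (hfix : ∀ x : ℝ, 0 ≤ x → (f x = x ↔ x = 0 ∨ x = κ₁ ∨ x = κ₂))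
    (hfup : ∀ x ∈ Ioo κ₁ κ₂, x < f x)
    (hfdown : ∀ x : ℝ, x ∈ Ioo 0 κ₁ ∪ Ioi κ₂ → f x < x)
    (C : ℝ) (hC : 0 ≤ C)
    (σ : ℝ → ℝ) (hσ : ∀ t : ℝ, 0 ≤ t → 0 ≤ σ t ∧ σ t ≤ βbar * exp (-μlow * t) * C)
    (B : ℝ → ℝ) (hBcont : Continuous B) (hBpos : ∀ t, 0 ≤ B t)
    (hBbdd : ∃ K, ∀ t, B t ≤ K)
    (hB : ∀ t : ℝ, 0 ≤ t → B t = σ t + ∫ a in (0:ℝ)..t, γ a * f (B (t - a))) :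
    limsup B atTop ≤ f (limsup B atTop) ∧
    (limsup B atTop = 0 ∨ limsup B atTop ∈ Icc κ₁ κ₂) := by
  obtain ⟨K, hK⟩ := hBbdd
  have hK0 : (0:ℝ) ≤ K := le_trans (hBpos 0) (hK 0)
  set L := limsup B atTop with hLdef
  have hBddAbove : IsBoundedUnder (· ≤ ·) atTop B := isBoundedUnder_of ⟨K, fun t => hK t⟩
  have hCobdd : IsCoboundedUnder (· ≤ ·) atTop B :=
    isCoboundedUnder_le_of_le atTop fun t => hBpos t
  have hL0 : (0:ℝ) ≤ L :=
    le_limsup_of_frequently_le (Frequently.of_forall fun t => hBpos t) hBddAbove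
  -- bound on f ∘ B
  set M := f K with hMdef
  have hM0 : 0 ≤ M := hfpos K hK0
  have hfB_le : ∀ s : ℝ, f (B s) ≤ M := fun s => hfmono (hBpos s) hK0 (hK s)
  have hfB_pos : ∀ s : ℝ, 0 ≤ f (B s) := fun s => hfpos _ (hBpos s)
  -- integrability of γ on Ioi 0
  have hexp_int : IntegrableOn (fun x => βbar * exp (-μlow * x)) (Ioi (0:ℝ)) :=
    (exp_neg_integrableOn_Ioi 0 hμlow).const_mul βbar
  have hγint1 : IntegrableOn γ (Ioi (0:ℝ)) := by
    refine Integrable.mono hexp_int hγmeas.aestronglyMeasurable ?_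
    rw [ae_restrict_iff' measurableSet_Ioi]
    refine ae_of_all _ fun a ha => ?_
    rw [Real.norm_eq_abs, abs_of_nonneg (hγpos a)]
    exact le_trans (hγbdd a (le_of_lt ha)) (le_abs_self _)
  -- the partial integral of γ is at most 1
  have hγpartial : ∀ s : ℝ, 0 ≤ s → ∫ a in (0:ℝ)..s, γ a ≤ 1 := by
    intro s hs
    rw [intervalIntegral.integral_of_le hs, ← hγint]
    exact setIntegral_mono_set hγint1 (ae_of_all _ fun a => hγpos a)
      (HasSubset.Subset.eventuallyLE Ioc_subset_Ioi_self)
  -- key step: L ≤ f (L + ε) for every ε > 0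
  have key : ∀ ε : ℝ, 0 < ε → L ≤ f (L + ε) := by
    intro ε hε
    have hLε : 0 ≤ f (L + ε) := hfpos _ (by linarith)
    obtain ⟨T0, hT0⟩ := eventually_atTop.mp
      (eventually_lt_of_limsup_lt (lt_add_of_pos_right L hε) hBddAbove)
    set T := max T0 0 with hTdef
    have hTnn : (0:ℝ) ≤ T := le_max_right _ _
    have hTev : ∀ s : ℝ, T ≤ s → B s < L + ε := fun s hs =>
      hT0 s (le_trans (le_max_left _ _) hs)
    -- main pointwise estimate
    have hmain : ∀ t : ℝ, T ≤ t →
        B t ≤ σ t + f (L + ε) + M * βbar * exp (-μlow * (t - T)) * T := by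
      intro t ht
      have ht0 : (0:ℝ) ≤ t := le_trans hTnn ht
      have htT : (0:ℝ) ≤ t - T := sub_nonneg.mpr ht
      have htT' : t - T ≤ t := by linarith
      have hmeas : Measurable fun a => γ a * f (B (t - a)) :=
        hγmeas.mul ((hfcont.comp (hBcont.comp (continuous_const.sub continuous_id))).measurable)
      have hintOn : IntegrableOn (fun a => γ a * f (B (t - a))) (Ioc 0 t) := by
        refine Measure.integrableOn_of_bounded (M := βbar * M) measure_Ioc_lt_top.ne
          hmeas.aestronglyMeasurable ?_
        rw [ae_restrict_iff' measurableSet_Ioc]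
        refine ae_of_all _ fun a ha => ?_
        rw [Real.norm_eq_abs, abs_of_nonneg (mul_nonneg (hγpos a) (hfB_pos _))]
        have h1 : γ a ≤ βbar * exp (-μlow * a) := hγbdd a (le_of_lt ha.1)
        have h2 : exp (-μlow * a) ≤ 1 := by
          rw [exp_le_one_iff]
          nlinarith [ha.1]
        calc γ a * f (B (t - a)) ≤ (βbar * exp (-μlow * a)) * M := by
              apply mul_le_mul h1 (hfB_le _) (hfB_pos _)
              positivity
          _ ≤ βbar * M := by
              nlinarith [mul_le_mul_of_nonneg_right
                (mul_le_mul_of_nonneg_left h2 hβbar.le) hM0]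
      have hii1 : IntervalIntegrable (fun a => γ a * f (B (t - a))) volume 0 (t - T) :=
        (intervalIntegrable_iff_integrableOn_Ioc_of_le htT).mpr
          (hintOn.mono_set (Ioc_subset_Ioc le_rfl htT'))
      have hii2 : IntervalIntegrable (fun a => γ a * f (B (t - a))) volume (t - T) t :=
        (intervalIntegrable_iff_integrableOn_Ioc_of_le htT').mpr
          (hintOn.mono_set (Ioc_subset_Ioc htT le_rfl))
      have hsplit : (∫ a in (0:ℝ)..t, γ a * f (B (t - a))) =
          (∫ a in (0:ℝ)..(t - T), γ a * f (B (t - a))) +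
          ∫ a in (t - T)..t, γ a * f (B (t - a)) :=
        (intervalIntegral.integral_add_adjacent_intervals hii1 hii2).symm
      -- first piece
      have e1 : (∫ a in (0:ℝ)..(t - T), γ a * f (B (t - a))) ≤ f (L + ε) := by
        have hiiγ : IntervalIntegrable (fun a => γ a * f (L + ε)) volume 0 (t - T) := by
          refine (intervalIntegrable_iff_integrableOn_Ioc_of_le htT).mpr ?_
          exact (hγint1.mono_set (Ioc_subset_Ioi_self)).mul_const _
        have h1 : (∫ a in (0:ℝ)..(t - T), γ a * f (B (t - a))) ≤
            ∫ a in (0:ℝ)..(t - T), γ a * f (L + ε) := by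
          refine intervalIntegral.integral_mono_on htT hii1 hiiγ fun a ha => ?_
          have hBa : B (t - a) ≤ L + ε :=
            le_of_lt (hTev (t - a) (by linarith [ha.1, ha.2]))
          exact mul_le_mul_of_nonneg_left
            (hfmono (hBpos _) (Set.mem_Ici.mpr (by linarith)) hBa) (hγpos a)
        calc (∫ a in (0:ℝ)..(t - T), γ a * f (B (t - a)))
            ≤ ∫ a in (0:ℝ)..(t - T), γ a * f (L + ε) := h1
          _ = (∫ a in (0:ℝ)..(t - T), γ a) * f (L + ε) := by
              rw [← intervalIntegral.integral_mul_const]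
          _ ≤ 1 * f (L + ε) :=
              mul_le_mul_of_nonneg_right (hγpartial _ htT) hLε
          _ = f (L + ε) := one_mul _
      -- second piece
      have e2 : (∫ a in (t - T)..t, γ a * f (B (t - a))) ≤
          M * βbar * exp (-μlow * (t - T)) * T := by
        have hconst : IntervalIntegrable
            (fun _ : ℝ => βbar * exp (-μlow * (t - T)) * M) volume (t - T) t :=
          intervalIntegrable_const
        have h1 : (∫ a in (t - T)..t, γ a * f (B (t - a))) ≤
            ∫ _ in (t - T)..t, βbar * exp (-μlow * (t - T)) * M := by
          refine intervalIntegral.integral_mono_on htT' hii2 hconst fun a ha => ?_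
          have ha1 : t - T ≤ a := ha.1
          have ha0 : 0 ≤ a := le_trans htT ha1
          have hγa : γ a ≤ βbar * exp (-μlow * a) := hγbdd a ha0
          have hexp : exp (-μlow * a) ≤ exp (-μlow * (t - T)) := by
            apply exp_le_exp.mpr
            nlinarith
          calc γ a * f (B (t - a)) ≤ (βbar * exp (-μlow * a)) * M := by
                apply mul_le_mul hγa (hfB_le _) (hfB_pos _); positivity
            _ ≤ βbar * exp (-μlow * (t - T)) * M := by
                nlinarith [mul_le_mul_of_nonneg_right
                  (mul_le_mul_of_nonneg_left hexp hβbar.le) hM0]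
        rw [intervalIntegral.integral_const] at h1
        have : (t - (t - T)) = T := by ring
        rw [this, smul_eq_mul] at h1
        nlinarith [h1]
      rw [hB t ht0, hsplit]
      linarith [e1, e2]
    -- asymptotic step
    have hexp1 : Tendsto (fun t : ℝ => exp (-μlow * t)) atTop (𝓝 0) := by
      have h1 : Tendsto (fun t : ℝ => μlow * t) atTop atTop :=
        Tendsto.const_mul_atTop hμlow tendsto_id
      refine (tendsto_exp_neg_atTop_nhds_zero.comp h1).congr fun t => ?_
      show exp (-(μlow * t)) = exp (-μlow * t)
      rw [neg_mul]
    have hg : Tendsto (fun t : ℝ => βbar * exp (-μlow * t) * C +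
        M * βbar * exp (-μlow * (t - T)) * T) atTop (𝓝 0) := by
      have h1 : Tendsto (fun t : ℝ => βbar * exp (-μlow * t) * C) atTop (𝓝 0) := by
        have := (hexp1.const_mul βbar).mul_const C
        simpa using this
      have h2 : Tendsto (fun t : ℝ => M * βbar * exp (-μlow * (t - T)) * T) atTop (𝓝 0) := by
        have hshift : Tendsto (fun t : ℝ => exp (-μlow * (t - T))) atTop (𝓝 0) := by
          have h3 := hexp1.comp (tendsto_atTop_add_const_right atTop (-T) tendsto_id)
          refine h3.congr fun t => ?_
          show exp (-μlow * (t + -T)) = exp (-μlow * (t - T))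
          rw [sub_eq_add_neg]
        have := ((hshift.const_mul (M * βbar)).mul_const T)
        simpa [mul_assoc] using this
      simpa using h1.add h2
    refine real_le_of_forall_pos_le_add fun δ hδ => ?_
    refine limsup_le_of_le hCobdd ?_
    filter_upwards [eventually_ge_atTop T, hg.eventually_lt_const hδ] with t ht hgt
    have ht0 : (0:ℝ) ≤ t := le_trans hTnn ht
    have hσt := (hσ t ht0).2
    have := hmain t ht
    linarith
  -- from `L ≤ f (L + ε)` for all ε > 0, get `L ≤ f L` by continuity
  have hLfL : L ≤ f L := by
    have htend : Tendsto (fun ε : ℝ => f (L + ε)) (nhdsWithin 0 (Ioi 0)) (𝓝 (f L)) := by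
      have h1 : Tendsto (fun ε : ℝ => L + ε) (nhdsWithin 0 (Ioi 0)) (𝓝 L) := by
        have : Tendsto (fun ε : ℝ => L + ε) (𝓝 0) (𝓝 (L + 0)) :=
          (continuous_const.add continuous_id).tendsto 0
        simpa using this.mono_left nhdsWithin_le_nhds
      exact (hfcont.continuousAt.tendsto).comp h1
    refine ge_of_tendsto htend ?_
    filter_upwards [self_mem_nhdsWithin] with ε hε
    exact key ε hε
  refine ⟨hLfL, ?_⟩
  rcases eq_or_lt_of_le hL0 with h0 | h0
  · exact Or.inl h0.symm
  · refine Or.inr ⟨?_, ?_⟩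
    · by_contra h
      push_neg at h
      have := hfdown L (Or.inl ⟨h0, h⟩)
      linarith
    · by_contra h
      push_neg at h
      have := hfdown L (Or.inr h)
      linarith
end

section
/- Under the same hypotheses as the limsup bound, the limit inferior B* := liminf_{t→∞} B(t) of a bounded nonnegative continuous solution of B(t) = σ(t) + ∫₀^t γ(a)f(B(t-a))da, with σ(t) → 0 as t → ∞ and ∫₀^∞ γ = 1, satisfies B* ≥ f(B*), and hence B* ∈ [0, κ₁] ∪ {κ₂}. -/
open MeasureTheory Real Set Filter Topology

/-!
Write `I_g(t) = ∫₀ᵗ γ(a) g(t - a) da`. As `γ` is a probability density on `(0, ∞)`, its mass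
beyond a fixed lag `T` tends to `0`, so for bounded `g` the value `I_g(t)` only depends, up to a
vanishing error, on `g` over `[T, t]`; hence `liminf g ≤ liminf I_g` and `limsup I_g ≤ limsup g`.
With `g = f ∘ B`, `B = σ + I_g`, `σ → 0`, and `f` continuous and increasing (so commuting with
`liminf` and `limsup`), this gives `f B_* ≤ B_*` and `B^* ≤ f B^*`. The latter forces
`B^* ≤ κ₂`, so `B_* ≤ κ₂`, and the former excludes `B_* ∈ (κ₁, κ₂)`.
-/

noncomputable def volterraConv (γ g : ℝ → ℝ) (t : ℝ) : ℝ :=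
  ∫ a in (0:ℝ)..t, γ a * g (t - a)

section LimsupLiminf

variable {ι : Type*} {l : Filter ι} [l.NeBot]

lemma limsup_add_of_tendsto_zero {u v : ι → ℝ} (hle : IsBoundedUnder (· ≤ ·) l u)
    (hge : IsBoundedUnder (· ≥ ·) l u) (hv : Tendsto v l (𝓝 0)) :
    limsup (u + v) l = limsup u l := by
  have hv_le := hv.isBoundedUnder_le
  have hv_ge := hv.isBoundedUnder_ge
  refine le_antisymm ?_ ?_
  · simpa [hv.limsup_eq] using
      limsup_add_le hge hle hv_ge.isCoboundedUnder_le hv_le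
  · simpa [hv.liminf_eq] using
      le_limsup_add hle hge.isCoboundedUnder_le hv_le hv_ge

lemma liminf_add_of_tendsto_zero {u v : ι → ℝ} (hle : IsBoundedUnder (· ≤ ·) l u)
    (hge : IsBoundedUnder (· ≥ ·) l u) (hv : Tendsto v l (𝓝 0)) :
    liminf (u + v) l = liminf u l := by
  have hv_le := hv.isBoundedUnder_le
  have hv_ge := hv.isBoundedUnder_ge
  refine le_antisymm ?_ ?_
  · simpa [add_comm u, hv.limsup_eq] using
      liminf_add_le hv_ge hv_le hge hle.isCoboundedUnder_ge
  · simpa [hv.liminf_eq] using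
      le_liminf_add hge hle hv_ge hv_le.isCoboundedUnder_ge

lemma limsup_neg_eq_neg_liminf {u : ι → ℝ} (hle : IsBoundedUnder (· ≤ ·) l u)
    (hge : IsBoundedUnder (· ≥ ·) l u) :
    limsup (-u) l = -liminf u l :=
  (Antitone.map_liminf_of_continuousAt (fun _ _ => neg_le_neg) u continuous_neg.continuousAt
    hle.isCoboundedUnder_ge hge).symm

lemma MonotoneOn.comp_max_zero {f : ℝ → ℝ} (hf : MonotoneOn f (Ici 0)) :
    Monotone fun x => f (max x 0) :=
  fun x y hxy => hf (le_max_right x 0) (le_max_right y 0) (max_le_max_right 0 hxy)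

lemma MonotoneOn.map_limsup_of_nonneg {f : ℝ → ℝ} (hf : MonotoneOn f (Ici 0))
    (hfc : Continuous f) {u : ι → ℝ} (hu : ∀ i, 0 ≤ u i) (hle : IsBoundedUnder (· ≤ ·) l u) :
    f (limsup u l) = limsup (f ∘ u) l := by
  have hge : IsBoundedUnder (· ≥ ·) l u := isBoundedUnder_of ⟨0, hu⟩
  have h0 : 0 ≤ limsup u l := le_limsup_of_frequently_le (.of_forall hu) hle
  have h := hf.comp_max_zero.map_limsup_of_continuousAt u (by fun_prop) hle
    hge.isCoboundedUnder_le
  simpa [Function.comp_def, max_eq_left h0, max_eq_left (hu _)] using h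

lemma MonotoneOn.map_liminf_of_nonneg {f : ℝ → ℝ} (hf : MonotoneOn f (Ici 0))
    (hfc : Continuous f) {u : ι → ℝ} (hu : ∀ i, 0 ≤ u i) (hle : IsBoundedUnder (· ≤ ·) l u) :
    f (liminf u l) = liminf (f ∘ u) l := by
  have hge : IsBoundedUnder (· ≥ ·) l u := isBoundedUnder_of ⟨0, hu⟩
  have h0 : 0 ≤ liminf u l := le_liminf_of_le hle.isCoboundedUnder_ge (.of_forall hu)
  have h := hf.comp_max_zero.map_liminf_of_continuousAt u (by fun_prop)
    hle.isCoboundedUnder_ge hge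
  simpa [Function.comp_def, max_eq_left h0, max_eq_left (hu _)] using h

end LimsupLiminf

section VolterraConv

variable {γ g : ℝ → ℝ} {C : ℝ}

lemma integrableOn_Ioi_of_setIntegral_eq_one (hγ1 : ∫ a in Ioi (0:ℝ), γ a = 1) :
    IntegrableOn γ (Ioi 0) :=
  -- a non-integrable function has integral `0`
  Integrable.of_integral_ne_zero (by rw [hγ1]; exact one_ne_zero)

lemma intervalIntegrable_of_setIntegral_eq_one (hγ1 : ∫ a in Ioi (0:ℝ), γ a = 1) {s : ℝ}
    (hs : 0 ≤ s) : IntervalIntegrable γ volume 0 s :=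
  (intervalIntegrable_iff_integrableOn_Ioc_of_le hs).mpr
    ((integrableOn_Ioi_of_setIntegral_eq_one hγ1).mono_set Ioc_subset_Ioi_self)

lemma intervalIntegral_le_one_of_setIntegral_eq_one (hγ0 : ∀ a, 0 ≤ γ a)
    (hγ1 : ∫ a in Ioi (0:ℝ), γ a = 1) {s : ℝ} (hs : 0 ≤ s) : ∫ a in (0:ℝ)..s, γ a ≤ 1 := by
  rw [intervalIntegral.integral_of_le hs, ← hγ1]
  exact setIntegral_mono_set (integrableOn_Ioi_of_setIntegral_eq_one hγ1)
    (.of_forall fun a => hγ0 a) Ioc_subset_Ioi_self.eventuallyLE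

lemma tendsto_intervalIntegral_of_setIntegral_eq_one (hγ1 : ∫ a in Ioi (0:ℝ), γ a = 1) :
    Tendsto (fun s => ∫ a in (0:ℝ)..s, γ a) atTop (𝓝 1) :=
  hγ1 ▸ intervalIntegral_tendsto_integral_Ioi 0
    (integrableOn_Ioi_of_setIntegral_eq_one hγ1) tendsto_id

lemma intervalIntegrable_mul_comp_sub (hγ1 : ∫ a in Ioi (0:ℝ), γ a = 1) (hg : Measurable g)
    (hgC : ∀ s, |g s| ≤ C) (t : ℝ) {u v : ℝ} (hu : 0 ≤ u) (hv : 0 ≤ v) :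
    IntervalIntegrable (fun a => γ a * g (t - a)) volume u v := by
  have hγ : IntegrableOn γ (uIoc u v) :=
    (integrableOn_Ioi_of_setIntegral_eq_one hγ1).mono_set
      fun a ha => (le_min hu hv).trans_lt ha.1
  exact intervalIntegrable_iff.mpr <|
    hγ.mul_bdd (hg.comp (measurable_const.sub measurable_id)).aestronglyMeasurable
    (.of_forall fun a => hgC (t - a))

lemma abs_volterraConv_le (hγ0 : ∀ a, 0 ≤ γ a) (hγ1 : ∫ a in Ioi (0:ℝ), γ a = 1)
    (hgC : ∀ s, |g s| ≤ C) {t : ℝ} (ht : 0 ≤ t) : |volterraConv γ g t| ≤ C := by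
  have hC : 0 ≤ C := (abs_nonneg _).trans (hgC 0)
  have hγC : IntervalIntegrable (fun a => γ a * C) volume 0 t :=
    (intervalIntegrable_of_setIntegral_eq_one hγ1 ht).mul_const C
  calc |volterraConv γ g t| ≤ ∫ a in (0:ℝ)..t, γ a * C := by
        rw [← Real.norm_eq_abs, volterraConv]
        refine intervalIntegral.norm_integral_le_of_norm_le ht (.of_forall fun a _ => ?_) hγC
        rw [norm_mul, Real.norm_of_nonneg (hγ0 a)]
        exact mul_le_mul_of_nonneg_left (hgC _) (hγ0 a)
    _ = (∫ a in (0:ℝ)..t, γ a) * C := intervalIntegral.integral_mul_const C γ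
    _ ≤ 1 * C := mul_le_mul_of_nonneg_right
        (intervalIntegral_le_one_of_setIntegral_eq_one hγ0 hγ1 ht) hC
    _ = C := one_mul C

lemma tendsto_intervalIntegral_sub_const_of_setIntegral_eq_one
    (hγ1 : ∫ a in Ioi (0:ℝ), γ a = 1) (T : ℝ) :
    Tendsto (fun t => ∫ a in (0:ℝ)..(t - T), γ a) atTop (𝓝 1) :=
  (tendsto_intervalIntegral_of_setIntegral_eq_one hγ1).comp
    (tendsto_atTop_add_const_right atTop (-T) tendsto_id)

lemma tendsto_intervalIntegral_sub_const_self (hγ1 : ∫ a in Ioi (0:ℝ), γ a = 1) (T : ℝ) :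
    Tendsto (fun t => ∫ a in (t - T)..t, γ a) atTop (𝓝 0) := by
  refine (sub_self (1:ℝ) ▸ (tendsto_intervalIntegral_of_setIntegral_eq_one hγ1).sub
    (tendsto_intervalIntegral_sub_const_of_setIntegral_eq_one hγ1 T)).congr' ?_
  filter_upwards [eventually_ge_atTop (max T 0)] with t ht
  exact intervalIntegral.integral_interval_sub_left
    (intervalIntegrable_of_setIntegral_eq_one hγ1 ((le_max_right _ _).trans ht))
    (intervalIntegrable_of_setIntegral_eq_one hγ1 (by linarith [le_max_left T 0]))

lemma volterraConv_le_of_le (hγ0 : ∀ a, 0 ≤ γ a) (hγ1 : ∫ a in Ioi (0:ℝ), γ a = 1)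
    (hg : Measurable g) (hgC : ∀ s, |g s| ≤ C) {T c t : ℝ} (hT : 0 ≤ T) (hTt : T ≤ t)
    (hgc : ∀ s, T ≤ s → g s ≤ c) :
    volterraConv γ g t ≤ c * (∫ a in (0:ℝ)..(t - T), γ a) + C * ∫ a in (t - T)..t, γ a := by
  have htT : 0 ≤ t - T := sub_nonneg.mpr hTt
  rw [volterraConv, ← intervalIntegral.integral_add_adjacent_intervals
      (intervalIntegrable_mul_comp_sub hγ1 hg hgC t le_rfl htT)
      (intervalIntegrable_mul_comp_sub hγ1 hg hgC t htT (hT.trans hTt)),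
    ← intervalIntegral.integral_const_mul, ← intervalIntegral.integral_const_mul]
  have hIγ : ∀ {s : ℝ}, 0 ≤ s → IntervalIntegrable γ volume 0 s :=
    intervalIntegrable_of_setIntegral_eq_one hγ1
  gcongr ?_ + ?_
  · refine intervalIntegral.integral_mono_on htT
      (intervalIntegrable_mul_comp_sub hγ1 hg hgC t le_rfl htT) ((hIγ htT).const_mul c)
      fun a ha => ?_
    rw [mul_comm c]
    exact mul_le_mul_of_nonneg_left (hgc _ (by linarith [ha.2])) (hγ0 a)
  · refine intervalIntegral.integral_mono_on (by linarith)
      (intervalIntegrable_mul_comp_sub hγ1 hg hgC t htT (hT.trans hTt))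
      (((hIγ htT).symm.trans (hIγ (hT.trans hTt))).const_mul C) fun a _ => ?_
    rw [mul_comm C]
    exact mul_le_mul_of_nonneg_left ((le_abs_self _).trans (hgC _)) (hγ0 a)

lemma isBoundedUnder_volterraConv (hγ0 : ∀ a, 0 ≤ γ a) (hγ1 : ∫ a in Ioi (0:ℝ), γ a = 1)
    (hgC : ∀ s, |g s| ≤ C) :
    IsBoundedUnder (· ≤ ·) atTop (volterraConv γ g) ∧
      IsBoundedUnder (· ≥ ·) atTop (volterraConv γ g) := by
  have habs : ∀ᶠ t in atTop, |volterraConv γ g t| ≤ C :=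
    eventually_atTop.mpr ⟨0, fun t ht => abs_volterraConv_le hγ0 hγ1 hgC ht⟩
  exact ⟨isBoundedUnder_of_eventually_le (habs.mono fun t ht => (abs_le.mp ht).2),
    isBoundedUnder_of_eventually_ge (habs.mono fun t ht => (abs_le.mp ht).1)⟩

theorem limsup_volterraConv_le (hγ0 : ∀ a, 0 ≤ γ a) (hγ1 : ∫ a in Ioi (0:ℝ), γ a = 1)
    (hg : Measurable g) (hgC : ∀ s, |g s| ≤ C) :
    limsup (volterraConv γ g) atTop ≤ limsup g atTop := by
  refine le_of_forall_gt_imp_ge_of_dense fun c hc => ?_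
  have hg_bdd : IsBoundedUnder (· ≤ ·) atTop g :=
    isBoundedUnder_of ⟨C, fun s => (le_abs_self _).trans (hgC s)⟩
  obtain ⟨T₀, hT₀⟩ := eventually_atTop.mp (eventually_lt_of_limsup_lt hc hg_bdd)
  set T := max T₀ 0
  set majorant : ℝ → ℝ :=
    fun t => c * (∫ a in (0:ℝ)..(t - T), γ a) + C * ∫ a in (t - T)..t, γ a
  have hmajorant : Tendsto majorant atTop (𝓝 c) := by
    simpa using ((tendsto_intervalIntegral_sub_const_of_setIntegral_eq_one hγ1 T).const_mul c).add
      ((tendsto_intervalIntegral_sub_const_self hγ1 T).const_mul C)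
  have hle : ∀ᶠ t in atTop, volterraConv γ g t ≤ majorant t :=
    eventually_atTop.mpr ⟨T, fun t ht => volterraConv_le_of_le hγ0 hγ1 hg hgC (le_max_right _ _)
      ht fun s hs => (hT₀ s ((le_max_left _ _).trans hs)).le⟩
  calc limsup (volterraConv γ g) atTop ≤ limsup majorant atTop :=
        limsup_le_limsup hle (isBoundedUnder_volterraConv hγ0 hγ1 hgC).2.isCoboundedUnder_le
          hmajorant.isBoundedUnder_le
    _ = c := hmajorant.limsup_eq

theorem le_liminf_volterraConv (hγ0 : ∀ a, 0 ≤ γ a) (hγ1 : ∫ a in Ioi (0:ℝ), γ a = 1)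
    (hg : Measurable g) (hgC : ∀ s, |g s| ≤ C) :
    liminf g atTop ≤ liminf (volterraConv γ g) atTop := by
  have hneg : volterraConv γ (-g) = -volterraConv γ g := by
    ext t
    simp [volterraConv, intervalIntegral.integral_neg]
  have h := limsup_volterraConv_le hγ0 hγ1 hg.neg (C := C) (by simpa using hgC)
  obtain ⟨hI_le, hI_ge⟩ := isBoundedUnder_volterraConv hγ0 hγ1 hgC
  have hg_le : IsBoundedUnder (· ≤ ·) atTop g :=
    isBoundedUnder_of ⟨C, fun s => (le_abs_self _).trans (hgC s)⟩
  have hg_ge : IsBoundedUnder (· ≥ ·) atTop g :=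
    isBoundedUnder_of ⟨-C, fun s => (neg_abs_le _).trans' (neg_le_neg (hgC s))⟩
  rw [hneg, limsup_neg_eq_neg_liminf hI_le hI_ge, limsup_neg_eq_neg_liminf hg_le hg_ge] at h
  exact neg_le_neg_iff.mp h

end VolterraConv

lemma mem_Icc_or_eq_of_map_le_of_le_map {f : ℝ → ℝ} {κ₁ κ₂ L M : ℝ}
    (hfup : ∀ x ∈ Ioo κ₁ κ₂, x < f x) (hfdown : ∀ x, κ₂ < x → f x < x)
    (hL0 : 0 ≤ L) (hLM : L ≤ M) (hL : f L ≤ L) (hM : M ≤ f M) :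
    L ∈ Icc 0 κ₁ ∨ L = κ₂ := by
  have hMκ₂ : M ≤ κ₂ := not_lt.mp fun h => (hfdown M h).not_ge hM
  rcases le_or_gt L κ₁ with hLκ₁ | hκ₁L
  · exact Or.inl ⟨hL0, hLκ₁⟩
  · refine Or.inr ((hLM.trans hMκ₂).eq_or_lt.resolve_right fun hLκ₂ => ?_)
    exact (hfup L ⟨hκ₁L, hLκ₂⟩).not_ge hL

theorem volterra_liminf_classification_general
    (γ : ℝ → ℝ)
    (hγpos : ∀ a, 0 ≤ γ a)
    (hγint : ∫ a in Ioi (0:ℝ), γ a = 1)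
    (f : ℝ → ℝ) (hfcont : Continuous f) (hfmono : MonotoneOn f (Ici 0))
    (κ₁ κ₂ : ℝ)
    (hfup : ∀ x ∈ Ioo κ₁ κ₂, x < f x)
    (hfdown : ∀ x : ℝ, x ∈ Ioo 0 κ₁ ∪ Ioi κ₂ → f x < x)
    (σ : ℝ → ℝ)
    (hσ : Tendsto σ atTop (nhds 0))
    (B : ℝ → ℝ) (hBcont : Continuous B) (hBpos : ∀ t, 0 ≤ B t)
    (hBbdd : ∃ K, ∀ t, B t ≤ K)
    (hB : ∀ t : ℝ, 0 ≤ t → B t = σ t + ∫ a in (0:ℝ)..t, γ a * f (B (t - a))) :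
    f (liminf B atTop) ≤ liminf B atTop ∧
    (liminf B atTop ∈ Icc 0 κ₁ ∨ liminf B atTop = κ₂) := by
  obtain ⟨K, hK⟩ := hBbdd
  have hB_le : IsBoundedUnder (· ≤ ·) atTop B := isBoundedUnder_of ⟨K, hK⟩
  have hB_ge : IsBoundedUnder (· ≥ ·) atTop B := isBoundedUnder_of ⟨0, hBpos⟩
  have hfB : ∀ s, |(f ∘ B) s| ≤ max |f 0| |f K| := fun s =>
    abs_le_max_abs_abs (hfmono self_mem_Ici (hBpos s) (hBpos s))
      (hfmono (hBpos s) ((hBpos s).trans (hK s)) (hK s))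
  have hfB_meas : Measurable (f ∘ B) := (hfcont.comp hBcont).measurable
  have hB_eq : B =ᶠ[atTop] volterraConv γ (f ∘ B) + σ :=
    eventually_atTop.mpr ⟨0, fun t ht => (hB t ht).trans (add_comm _ _)⟩
  obtain ⟨hI_le, hI_ge⟩ := isBoundedUnder_volterraConv hγpos hγint hfB
  have hL : f (liminf B atTop) ≤ liminf B atTop := calc
    f (liminf B atTop) = liminf (f ∘ B) atTop := hfmono.map_liminf_of_nonneg hfcont hBpos hB_le
    _ ≤ liminf (volterraConv γ (f ∘ B)) atTop := le_liminf_volterraConv hγpos hγint hfB_meas hfB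
    _ = liminf B atTop := by rw [liminf_congr hB_eq, liminf_add_of_tendsto_zero hI_le hI_ge hσ]
  have hM : limsup B atTop ≤ f (limsup B atTop) := calc
    limsup B atTop = limsup (volterraConv γ (f ∘ B)) atTop := by
      rw [limsup_congr hB_eq, limsup_add_of_tendsto_zero hI_le hI_ge hσ]
    _ ≤ limsup (f ∘ B) atTop := limsup_volterraConv_le hγpos hγint hfB_meas hfB
    _ = f (limsup B atTop) := (hfmono.map_limsup_of_nonneg hfcont hBpos hB_le).symm
  exact ⟨hL, mem_Icc_or_eq_of_map_le_of_le_map hfup (fun x hx => hfdown x (Or.inr hx))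
    (le_liminf_of_le hB_le.isCoboundedUnder_ge (.of_forall hBpos))
    (liminf_le_limsup hB_le hB_ge) hL hM⟩

/-- the liminf of a bounded solution of the Volterra equation satisfies
`B* ≥ f(B*)`, hence `B* ∈ [0, κ₁] ∪ {κ₂}`. -/
theorem volterra_liminf_classification
    (γ : ℝ → ℝ) (βbar μlow : ℝ) (hβbar : 0 < βbar) (hμlow : 0 < μlow)
    (hγmeas : Measurable γ) (hγpos : ∀ a, 0 ≤ γ a)
    (hγint : ∫ a in Ioi (0:ℝ), γ a = 1)
    (hγbdd : ∀ a : ℝ, 0 ≤ a → γ a ≤ βbar * exp (-μlow * a))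
    (f : ℝ → ℝ) (hfcont : Continuous f) (hfmono : MonotoneOn f (Ici 0))
    (hfpos : ∀ x, 0 ≤ x → 0 ≤ f x)
    (κ₁ κ₂ : ℝ) (hκ₁ : 0 < κ₁) (hκ₁₂ : κ₁ < κ₂)
    (hfix : ∀ x : ℝ, 0 ≤ x → (f x = x ↔ x = 0 ∨ x = κ₁ ∨ x = κ₂))
    (hfup : ∀ x ∈ Ioo κ₁ κ₂, x < f x)
    (hfdown : ∀ x : ℝ, x ∈ Ioo 0 κ₁ ∪ Ioi κ₂ → f x < x)
    (σ : ℝ → ℝ) (hσpos : ∀ t : ℝ, 0 ≤ t → 0 ≤ σ t)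
    (hσ : Tendsto σ atTop (nhds 0))
    (B : ℝ → ℝ) (hBcont : Continuous B) (hBpos : ∀ t, 0 ≤ B t)
    (hBbdd : ∃ K, ∀ t, B t ≤ K)
    (hB : ∀ t : ℝ, 0 ≤ t → B t = σ t + ∫ a in (0:ℝ)..t, γ a * f (B (t - a))) :
    f (liminf B atTop) ≤ liminf B atTop ∧
    (liminf B atTop ∈ Icc 0 κ₁ ∨ liminf B atTop = κ₂) :=
  volterra_liminf_classification_general γ hγpos hγint f hfcont hfmono κ₁ κ₂ hfup hfdown σ hσ B
    hBcont hBpos hBbdd hB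
end

section
/- Let f: ℝ≥0 → ℝ≥0 be increasing (f(x) ≤ f(y) whenever x ≤ y) and Lipschitz, with f(0)=0. Let u₀ ≤ v₀ a.e. in L¹₊(0,∞). Then the unique continuous solutions b^u, b^v of the Volterra equation b(t) = f(∫_t^∞ β(a)e^{-∫_{a-t}^a μ(l)dl} w₀(a-t)da + ∫₀^t β(a)e^{-∫₀^a μ(l)dl} b(t-a)da) with w₀ = u₀ and w₀ = v₀ respectively satisfy b^u(t) ≤ b^v(t) for all t ≥ 0. -/
/-!
Write `w = (b^u - b^v)⁺`. The initial-data term is monotone in `w₀`, the survival-weighted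
kernel `β(a) e^{-∫ μ}` lies between `0` and `sup β`, and `f` is monotone and `L`-Lipschitz, so
`b^u(t) - b^v(t) ≤ L · sup β · ∫₀ᵗ w`. Grönwall's inequality for the primitive of `w` then
forces `w = 0`.
-/

open MeasureTheory Real Set Filter

lemma intervalIntegrable_of_mem_Icc {g : ℝ → ℝ} {C : ℝ} (hg : Measurable g)
    (hgC : ∀ x, g x ∈ Icc 0 C) (a b : ℝ) : IntervalIntegrable g volume a b :=
  (intervalIntegrable_const (c := C)).mono_fun hg.aestronglyMeasurable
    (ae_of_all _ fun x => by
      simp only [Real.norm_eq_abs, abs_of_nonneg (hgC x).1]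
      exact (hgC x).2.trans (le_abs_self C))

section Kernel

variable {β μ : ℝ → ℝ}

lemma integral_Ioc_eq_primitive_sub (hμ : ∀ a b, IntervalIntegrable μ volume a b) (x y : ℝ) :
    ∫ l in Ioc x y, μ l = (∫ l in 0..max x y, μ l) - ∫ l in 0..x, μ l := by
  have hIoc : Ioc x y = Ioc x (max x y) := by
    rcases le_total x y with hxy | hyx
    · rw [max_eq_right hxy]
    · rw [max_eq_left hyx, Ioc_self, Ioc_eq_empty_of_le hyx]
  rw [hIoc, ← intervalIntegral.integral_of_le (le_max_left x y),
    intervalIntegral.integral_interval_sub_left (hμ 0 _) (hμ 0 x)]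

lemma continuous_integral_Ioc (hμ : ∀ a b, IntervalIntegrable μ volume a b) :
    Continuous fun p : ℝ × ℝ => ∫ l in Ioc p.1 p.2, μ l := by
  simp_rw [integral_Ioc_eq_primitive_sub hμ]
  have hprim := intervalIntegral.continuous_primitive hμ 0
  fun_prop

lemma measurable_mul_exp_neg_integral_Ioc (hβ : Measurable β)
    (hμ : ∀ a b, IntervalIntegrable μ volume a b) {φ : ℝ → ℝ} (hφ : Continuous φ) :
    Measurable fun a => β a * exp (-∫ l in Ioc (φ a) a, μ l) :=
  hβ.mul (continuous_exp.comp
    ((continuous_integral_Ioc hμ).comp (hφ.prodMk continuous_id)).neg).measurable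

lemma mul_exp_neg_integral_Ioc_mem_Icc {C : ℝ} (hβ0 : ∀ a, 0 ≤ β a) (hβC : ∀ a, β a ≤ C)
    (hμ0 : ∀ l, 0 ≤ μ l) (x a : ℝ) : β a * exp (-∫ l in Ioc x a, μ l) ∈ Icc 0 C := by
  have hexp : exp (-∫ l in Ioc x a, μ l) ≤ 1 :=
    exp_le_one_iff.2 (neg_nonpos.2 (setIntegral_nonneg measurableSet_Ioc fun l _ => hμ0 l))
  refine ⟨mul_nonneg (hβ0 a) (exp_pos _).le, ?_⟩
  calc β a * exp (-∫ l in Ioc x a, μ l) ≤ C * 1 :=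
        mul_le_mul (hβC a) hexp (exp_pos _).le ((hβ0 a).trans (hβC a))
    _ = C := mul_one C

end Kernel

lemma measurePreserving_sub_right_Ioi (t : ℝ) :
    MeasurePreserving (fun a => a - t) (volume.restrict (Ioi t)) (volume.restrict (Ioi 0)) := by
  have := (measurePreserving_sub_right volume t).restrict_preimage
    (measurableSet_Ioi (a := (0 : ℝ)))
  rwa [show (fun a => a - t) ⁻¹' Ioi 0 = Ioi t by ext; simp] at this

section Volterra

variable {k u v bu bv : ℝ → ℝ} {C t : ℝ}

lemma setIntegral_Ioi_mul_comp_sub_mono (hk : AEStronglyMeasurable k (volume.restrict (Ioi t)))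
    (hkC : ∀ a, k a ∈ Icc 0 C) (hu : IntegrableOn u (Ioi 0)) (hv : IntegrableOn v (Ioi 0))
    (huv : ∀ᵐ a, a ∈ Ioi 0 → u a ≤ v a) :
    ∫ a in Ioi t, k a * u (a - t) ≤ ∫ a in Ioi t, k a * v (a - t) := by
  have hmp := measurePreserving_sub_right_Ioi t
  have hbound : ∀ᵐ a ∂volume.restrict (Ioi t), ‖k a‖ ≤ C := ae_of_all _ fun a => by
    rw [Real.norm_of_nonneg (hkC a).1]; exact (hkC a).2
  have huv' : ∀ᵐ a ∂volume.restrict (Ioi t), u (a - t) ≤ v (a - t) :=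
    hmp.quasiMeasurePreserving.ae ((ae_restrict_iff' measurableSet_Ioi).2 huv)
  refine integral_mono_ae
    (((hmp.integrable_comp hu.aestronglyMeasurable).2 hu).bdd_mul hk hbound)
    (((hmp.integrable_comp hv.aestronglyMeasurable).2 hv).bdd_mul hk hbound) ?_
  filter_upwards [huv'] with a ha
  exact mul_le_mul_of_nonneg_left ha (hkC a).1

lemma integral_mul_comp_sub_le (ht : 0 ≤ t) (hk : IntervalIntegrable k volume 0 t)
    (hkC : ∀ a, k a ∈ Icc 0 C) (hbu : Continuous bu) (hbv : Continuous bv) :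
    ∫ a in 0..t, k a * bu (t - a) ≤
      (∫ a in 0..t, k a * bv (t - a)) + C * ∫ s in 0..t, max (bu s - bv s) 0 := by
  set d : ℝ → ℝ := fun s => max (bu s - bv s) 0
  have hint : ∀ {b : ℝ → ℝ}, Continuous b →
      IntervalIntegrable (fun a => k a * b (t - a)) volume 0 t :=
    fun hb => hk.mul_continuousOn (by fun_prop)
  have hdt : IntervalIntegrable (fun a => C * d (t - a)) volume 0 t := by
    apply Continuous.intervalIntegrable; fun_prop
  calc ∫ a in 0..t, k a * bu (t - a)
      ≤ ∫ a in 0..t, (k a * bv (t - a) + C * d (t - a)) := by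
        refine intervalIntegral.integral_mono_on ht (hint hbu) ((hint hbv).add hdt) fun a _ => ?_
        have hdpos : 0 ≤ d (t - a) := le_max_right _ _
        have hbd : bu (t - a) ≤ bv (t - a) + d (t - a) := by
          linarith [le_max_left (bu (t - a) - bv (t - a)) 0]
        nlinarith [mul_nonneg (hkC a).1 (sub_nonneg.2 hbd),
          mul_nonneg (sub_nonneg.2 (hkC a).2) hdpos]
    _ = (∫ a in 0..t, k a * bv (t - a)) + C * ∫ s in 0..t, d s := by
        rw [intervalIntegral.integral_add (hint hbv) hdt, intervalIntegral.integral_const_mul,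
          intervalIntegral.integral_comp_sub_left d t, sub_self, sub_zero]

lemma Monotone.sub_le_mul_of_le_add {f : ℝ → ℝ} {L : NNReal} (hf : Monotone f)
    (hLip : LipschitzWith L f) {x y J : ℝ} (hJ : 0 ≤ J) (hxy : x ≤ y + J) :
    f x - f y ≤ L * J := by
  have hdist := hLip.dist_le_mul (y + J) y
  rw [Real.dist_eq, Real.dist_eq, add_sub_cancel_left, abs_of_nonneg hJ] at hdist
  linarith [hf hxy, le_abs_self (f (y + J) - f y)]

lemma volterra_sub_le {f : ℝ → ℝ} {L : NNReal} (hf : Monotone f) (hLip : LipschitzWith L f)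
    {Au Av : ℝ} (hA : Au ≤ Av) (ht : 0 ≤ t) (hk : IntervalIntegrable k volume 0 t)
    (hkC : ∀ a, k a ∈ Icc 0 C) (hbu : Continuous bu) (hbv : Continuous bv) :
    f (Au + ∫ a in 0..t, k a * bu (t - a)) - f (Av + ∫ a in 0..t, k a * bv (t - a)) ≤
      L * C * ∫ s in 0..t, max (bu s - bv s) 0 := by
  have hC : 0 ≤ C := (hkC 0).1.trans (hkC 0).2
  have hpos : 0 ≤ ∫ s in 0..t, max (bu s - bv s) 0 :=
    intervalIntegral.integral_nonneg ht fun s _ => le_max_right _ _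
  rw [mul_assoc]
  exact hf.sub_le_mul_of_le_add hLip (mul_nonneg hC hpos)
    (by linarith [integral_mul_comp_sub_le ht hk hkC hbu hbv])

end Volterra

lemma nonpos_of_le_mul_integral {d : ℝ → ℝ} {C : ℝ} (hd : Continuous d) (hC : 0 ≤ C)
    (h : ∀ t, 0 ≤ t → d t ≤ C * ∫ s in 0..t, d s) : ∀ t, 0 ≤ t → d t ≤ 0 := by
  intro T hT
  have hH : ∀ x, HasDerivAt (fun t => ∫ s in 0..t, d s) (d x) x := fun x =>
    (hd.integral_hasStrictDerivAt 0 x).hasDerivAt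
  have hHT : ∫ s in 0..T, d s ≤ gronwallBound 0 C 0 (T - 0) :=
    le_gronwallBound_of_liminf_deriv_right_le (fun x _ => (hH x).continuousAt.continuousWithinAt)
      (fun x _ r hr => by
        simpa [slope_def_field, div_eq_inv_mul] using
          (hH x).hasDerivWithinAt.liminf_right_slope_le hr)
      (by simp) (fun x hx => by simpa using h x hx.1) T ⟨hT, le_rfl⟩
  rw [gronwallBound_ε0_δ0] at hHT
  nlinarith [h T hT]

lemma nonpos_of_le_mul_integral_max {d : ℝ → ℝ} {C : ℝ} (hd : Continuous d) (hC : 0 ≤ C)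
    (h : ∀ t, 0 ≤ t → d t ≤ C * ∫ s in 0..t, max (d s) 0) : ∀ t, 0 ≤ t → d t ≤ 0 := by
  have hmax := nonpos_of_le_mul_integral (d := fun s => max (d s) 0) (by fun_prop) hC
    fun t ht => max_le (h t ht)
      (mul_nonneg hC (intervalIntegral.integral_nonneg ht fun s _ => le_max_right _ _))
  exact fun t ht => (le_max_left _ _).trans (hmax t ht)

theorem volterra_comparison_principle_general
    (β μ : ℝ → ℝ)
    (hβmeas : Measurable β) (hμmeas : Measurable μ)
    (hβpos : ∀ a, 0 ≤ β a) (hμpos : ∀ a, 0 ≤ μ a)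
    (hβbdd : ∃ C, ∀ a, β a ≤ C) (hμbdd : ∃ C, ∀ a, μ a ≤ C)
    (f : ℝ → ℝ) (hmono : Monotone f) (L : NNReal) (hLip : LipschitzWith L f)
    (u₀ v₀ : ℝ → ℝ)
    (hu₀ : IntegrableOn u₀ (Ioi (0:ℝ))) (hv₀ : IntegrableOn v₀ (Ioi (0:ℝ)))
    (huv : ∀ᵐ a : ℝ, a ∈ Ioi (0:ℝ) → u₀ a ≤ v₀ a)
    (bu bv : ℝ → ℝ) (hbu : Continuous bu) (hbv : Continuous bv)
    (hbueq : ∀ t : ℝ, 0 ≤ t → bu t =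
      f ((∫ a in Ioi t, β a * exp (-∫ l in Ioc (a - t) a, μ l) * u₀ (a - t)) +
         ∫ a in (0:ℝ)..t, β a * exp (-∫ l in Ioc 0 a, μ l) * bu (t - a)))
    (hbveq : ∀ t : ℝ, 0 ≤ t → bv t =
      f ((∫ a in Ioi t, β a * exp (-∫ l in Ioc (a - t) a, μ l) * v₀ (a - t)) +
         ∫ a in (0:ℝ)..t, β a * exp (-∫ l in Ioc 0 a, μ l) * bv (t - a))) :
    ∀ t : ℝ, 0 ≤ t → bu t ≤ bv t := by
  obtain ⟨Cβ, hCβ⟩ := hβbdd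
  obtain ⟨Cμ, hCμ⟩ := hμbdd
  have hμint := intervalIntegrable_of_mem_Icc hμmeas fun l => ⟨hμpos l, hCμ l⟩
  have hkernel := mul_exp_neg_integral_Ioc_mem_Icc hβpos hCβ hμpos
  have key : ∀ t, 0 ≤ t → bu t - bv t ≤ L * Cβ * ∫ s in 0..t, max (bu s - bv s) 0 := by
    intro t ht
    rw [hbueq t ht, hbveq t ht]
    refine volterra_sub_le hmono hLip ?_ ht ?_ (hkernel 0) hbu hbv
    · exact setIntegral_Ioi_mul_comp_sub_mono
        (measurable_mul_exp_neg_integral_Ioc hβmeas hμint (by fun_prop)).aestronglyMeasurable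
        (fun a => hkernel (a - t) a) hu₀ hv₀ huv
    · exact intervalIntegrable_of_mem_Icc
        (measurable_mul_exp_neg_integral_Ioc hβmeas hμint continuous_const) (hkernel 0) 0 t
  have hdiff := nonpos_of_le_mul_integral_max (d := fun s => bu s - bv s) (by fun_prop)
    (mul_nonneg L.coe_nonneg ((hβpos 0).trans (hCβ 0))) key
  exact fun t ht => sub_nonpos.1 (hdiff t ht)

/-- comparison principle for the Volterra formulation of the
Gurtin-MacCamy model. -/
theorem volterra_comparison_principle
    (β μ : ℝ → ℝ) (μlow : ℝ) (hμlow : 0 < μlow)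
    (hβmeas : Measurable β) (hμmeas : Measurable μ)
    (hβpos : ∀ a, 0 ≤ β a) (hμpos : ∀ a, 0 ≤ μ a)
    (hβbdd : ∃ C, ∀ a, β a ≤ C) (hμbdd : ∃ C, ∀ a, μ a ≤ C)
    (hμlb : ∀ᵐ a : ℝ, a ∈ Ioi (0:ℝ) → μlow ≤ μ a)
    (hnorm : ∫ a in Ioi (0:ℝ), β a * exp (-∫ l in Ioc 0 a, μ l) = 1)
    (f : ℝ → ℝ) (hmono : Monotone f) (L : NNReal) (hLip : LipschitzWith L f)
    (hf0 : f 0 = 0)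
    (u₀ v₀ : ℝ → ℝ)
    (hu₀ : IntegrableOn u₀ (Ioi (0:ℝ))) (hv₀ : IntegrableOn v₀ (Ioi (0:ℝ)))
    (hu₀pos : ∀ᵐ a : ℝ, a ∈ Ioi (0:ℝ) → 0 ≤ u₀ a)
    (huv : ∀ᵐ a : ℝ, a ∈ Ioi (0:ℝ) → u₀ a ≤ v₀ a)
    (bu bv : ℝ → ℝ) (hbu : Continuous bu) (hbv : Continuous bv)
    (hbueq : ∀ t : ℝ, 0 ≤ t → bu t =
      f ((∫ a in Ioi t, β a * exp (-∫ l in Ioc (a - t) a, μ l) * u₀ (a - t)) +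
         ∫ a in (0:ℝ)..t, β a * exp (-∫ l in Ioc 0 a, μ l) * bu (t - a)))
    (hbveq : ∀ t : ℝ, 0 ≤ t → bv t =
      f ((∫ a in Ioi t, β a * exp (-∫ l in Ioc (a - t) a, μ l) * v₀ (a - t)) +
         ∫ a in (0:ℝ)..t, β a * exp (-∫ l in Ioc 0 a, μ l) * bv (t - a))) :
    ∀ t : ℝ, 0 ≤ t → bu t ≤ bv t :=
  volterra_comparison_principle_general β μ hβmeas hμmeas hβpos hμpos hβbdd hμbdd f hmono L hLip u₀
    v₀ hu₀ hv₀ huv bu bv hbu hbv hbueq hbveq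
end

section
/- Let γ ∈ L¹₊(0,∞) with ∫₀^∞ γ(a)da = 1, and let ρ > 1. There is no continuous function ξ: ℝ≥0 → ℝ with ξ(t) > 0 for all t ≥ 0, ξ(t) → 0 as t → ∞, and ξ(t) ≥ ρ ∫₀^{min(t,a*)} γ(a) ξ(t-a) da for all t sufficiently large, where a* ∈ (0,∞] and γ vanishes on (a*,∞). -/
open MeasureTheory Set Filter
open scoped ENNReal

/-!
If `ξ > 0` tends to `0`, it keeps reaching new running minima: there are arbitrarily large `s`
with `ξ s ≤ ξ u` for all `u ∈ [0, s]`. At such an `s` the truncated convolution is at least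
`ξ s` times the mass `m(s)` of `γ` on `[0, min(s, a*)]`, and `m(s) → 1 > ρ⁻¹` because `γ`
vanishes beyond `a*`. For large such `s` the inequality then reads `ρ m(s) ξ s ≤ ξ s` with
`ρ m(s) > 1`, which is impossible since `ξ s > 0`.
-/

theorem frequently_isMinOn_Icc_of_tendsto_zero {ξ : ℝ → ℝ} {t₀ : ℝ}
    (hξ : ContinuousOn ξ (Ici t₀)) (hpos : ∀ t, t₀ ≤ t → 0 < ξ t)
    (hlim : Tendsto ξ atTop (nhds 0)) :
    ∃ᶠ s in atTop, IsMinOn ξ (Icc t₀ s) s := by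
  refine frequently_atTop.2 fun t₁ => ?_
  obtain ⟨u, hu, hu_min⟩ := isCompact_Icc.exists_isMinOn
    (nonempty_Icc.2 (le_max_left t₀ t₁)) (hξ.mono Icc_subset_Ici_self)
  obtain ⟨T, hTu, hT⟩ :=
    ((hlim.eventually_lt_const (hpos u hu.1)).and (eventually_ge_atTop (max t₀ t₁))).exists
  obtain ⟨s, hs, hs_min⟩ := isCompact_Icc.exists_isMinOn
    (nonempty_Icc.2 ((le_max_left t₀ t₁).trans hT)) (hξ.mono Icc_subset_Ici_self)
  have hs_large : max t₀ t₁ < s := by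
    by_contra! hle
    exact (hs_min ⟨(le_max_left _ _).trans hT, le_rfl⟩).not_gt (hTu.trans_le (hu_min ⟨hs.1, hle⟩))
  exact ⟨s, (le_max_right _ _).trans hs_large.le,
    hs_min.on_subset (Icc_subset_Icc_right hs.2)⟩

theorem mul_intervalIntegral_le_intervalIntegral_mul_comp_sub {γ ξ : ℝ → ℝ} {s c : ℝ}
    (hc : 0 ≤ c) (hγ : ∀ a ∈ Icc 0 c, 0 ≤ γ a) (hγi : IntervalIntegrable γ volume 0 c)
    (hξ : ContinuousOn ξ (Icc (s - c) s)) (hmin : IsMinOn ξ (Icc (s - c) s) s) :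
    ξ s * ∫ a in (0:ℝ)..c, γ a ≤ ∫ a in (0:ℝ)..c, γ a * ξ (s - a) := by
  have hmaps : MapsTo (fun a => s - a) (uIcc 0 c) (Icc (s - c) s) := by
    intro a ha
    rw [uIcc_of_le hc] at ha
    exact ⟨by linarith [ha.2], by linarith [ha.1]⟩
  rw [← intervalIntegral.integral_const_mul]
  refine intervalIntegral.integral_mono_on hc (hγi.const_mul _)
    (hγi.mul_continuousOn (hξ.comp (continuousOn_const.sub continuousOn_id) hmaps))
    fun a ha => ?_
  rw [mul_comm]
  exact mul_le_mul_of_nonneg_left (hmin (hmaps (uIcc_of_le hc ▸ ha))) (hγ a ha)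

theorem toReal_min_ofReal_le {t : ℝ} (ht : 0 ≤ t) (x : ℝ≥0∞) :
    (min (ENNReal.ofReal t) x).toReal ≤ t :=
  (ENNReal.toReal_mono ENNReal.ofReal_ne_top (min_le_left _ _)).trans_eq
    (ENNReal.toReal_ofReal ht)

theorem intervalIntegral_min_ofReal_toReal_eq {γ : ℝ → ℝ} {astar : ℝ≥0∞}
    (hγsupp : ∀ a : ℝ, astar < ENNReal.ofReal a → γ a = 0) {t : ℝ} (ht : 0 ≤ t)
    (hγi : IntervalIntegrable γ volume 0 t) :
    ∫ a in (0:ℝ)..(min (ENNReal.ofReal t) astar).toReal, γ a = ∫ a in (0:ℝ)..t, γ a := by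
  set c := (min (ENNReal.ofReal t) astar).toReal
  have hmin_ne_top : min (ENNReal.ofReal t) astar ≠ ∞ :=
    ne_top_of_le_ne_top ENNReal.ofReal_ne_top (min_le_left _ _)
  have hct : c ≤ t := toReal_min_ofReal_le ht astar
  have hvanish : ∫ a in c..t, γ a = 0 := by
    rw [← intervalIntegral.integral_zero]
    refine intervalIntegral.integral_congr_ae (ae_of_all _ fun a ha => hγsupp a ?_)
    rw [uIoc_of_le hct] at ha
    by_contra! ha_le
    have hac : ENNReal.ofReal a ≤ min (ENNReal.ofReal t) astar :=
      le_min (ENNReal.ofReal_le_ofReal ha.2) ha_le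
    have ha_le_c := ENNReal.toReal_mono hmin_ne_top hac
    rw [ENNReal.toReal_ofReal (ENNReal.toReal_nonneg.trans ha.1.le)] at ha_le_c
    exact ha.1.not_ge ha_le_c
  have hc_mem : c ∈ uIcc 0 t := by
    rw [uIcc_of_le ht]
    exact ⟨ENNReal.toReal_nonneg, hct⟩
  rw [← intervalIntegral.integral_add_adjacent_intervals (b := c) (c := t)
    (hγi.mono_set (uIcc_subset_uIcc left_mem_uIcc hc_mem))
    (hγi.mono_set (uIcc_subset_uIcc hc_mem right_mem_uIcc)), hvanish, add_zero]

theorem no_positive_vanishing_subsolution_general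
    (γ : ℝ → ℝ) (hγpos : ∀ a, 0 ≤ γ a)
    (hγint : IntegrableOn γ (Ioi (0:ℝ)))
    (hγnorm : ∫ a in Ioi (0:ℝ), γ a = 1)
    (astar : ℝ≥0∞)
    (hγsupp : ∀ a : ℝ, astar < ENNReal.ofReal a → γ a = 0)
    (ρ : ℝ) (hρ : 1 < ρ) :
    ¬ ∃ ξ : ℝ → ℝ, Continuous ξ ∧ (∀ t : ℝ, 0 ≤ t → 0 < ξ t) ∧
      Tendsto ξ atTop (nhds 0) ∧
      (∀ᶠ t in atTop,
        ρ * ∫ a in (0:ℝ)..(min (ENNReal.ofReal t) astar).toReal, γ a * ξ (t - a) ≤ ξ t) := by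
  rintro ⟨ξ, hξc, hξpos, hξ0, hineq⟩
  set c : ℝ → ℝ := fun t => (min (ENNReal.ofReal t) astar).toReal
  have hγi : ∀ b, 0 ≤ b → IntervalIntegrable γ volume 0 b := fun b hb =>
    (intervalIntegrable_iff_integrableOn_Ioc_of_le hb).2 (hγint.mono_set Ioc_subset_Ioi_self)
  have hmass : Tendsto (fun t => ∫ a in (0:ℝ)..c t, γ a) atTop (nhds 1) := by
    refine hγnorm ▸ (intervalIntegral_tendsto_integral_Ioi 0 hγint tendsto_id).congr' ?_
    filter_upwards [eventually_ge_atTop 0] with t ht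
    exact (intervalIntegral_min_ofReal_toReal_eq hγsupp ht (hγi t ht)).symm
  obtain ⟨s, hmin, hs, hmass_s, hineq_s⟩ :=
    ((frequently_isMinOn_Icc_of_tendsto_zero hξc.continuousOn hξpos hξ0).and_eventually
      ((eventually_ge_atTop 0).and
        ((hmass.eventually_const_lt (inv_lt_one_of_one_lt₀ hρ)).and hineq))).exists
  have hwindow : Icc (s - c s) s ⊆ Icc 0 s :=
    Icc_subset_Icc_left (sub_nonneg.2 (toReal_min_ofReal_le hs astar))
  have hlower := mul_intervalIntegral_le_intervalIntegral_mul_comp_sub ENNReal.toReal_nonneg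
    (fun a _ => hγpos a) (hγi _ ENNReal.toReal_nonneg) hξc.continuousOn (hmin.on_subset hwindow)
  have hρmass : 1 < ρ * ∫ a in (0:ℝ)..c s, γ a :=
    (inv_lt_iff_one_lt_mul₀' (by linarith)).1 hmass_s
  nlinarith [hξpos s hs]

/-- no positive continuous function vanishing at infinity can eventually
dominate `ρ` times its own convolution with a probability kernel `γ`, when `ρ > 1`. -/
theorem no_positive_vanishing_subsolution
    (γ : ℝ → ℝ) (hγmeas : Measurable γ) (hγpos : ∀ a, 0 ≤ γ a)
    (hγint : IntegrableOn γ (Ioi (0:ℝ)))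
    (hγnorm : ∫ a in Ioi (0:ℝ), γ a = 1)
    (astar : ℝ≥0∞) (hastar : 0 < astar)
    (hγsupp : ∀ a : ℝ, astar < ENNReal.ofReal a → γ a = 0)
    (ρ : ℝ) (hρ : 1 < ρ) :
    ¬ ∃ ξ : ℝ → ℝ, Continuous ξ ∧ (∀ t : ℝ, 0 ≤ t → 0 < ξ t) ∧
      Tendsto ξ atTop (nhds 0) ∧
      (∀ᶠ t in atTop,
        ρ * ∫ a in (0:ℝ)..(min (ENNReal.ofReal t) astar).toReal, γ a * ξ (t - a) ≤ ξ t) :=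
  no_positive_vanishing_subsolution_general γ hγpos hγint hγnorm astar hγsupp ρ hρ
end

section
/- Let γ: [0,a*] → ℝ≥0 be integrable with ∫_σ^{a*} γ(a)da > 0 for every σ ∈ [0,a*). Let φ, ψ ∈ C([-a*,0]; ℝ≥0) with φ ≤ ψ and φ(s) < ψ(s) for all s in some nonempty open interval (α̲, ᾱ) ⊆ (-a*,0). Then the function σ(t) = ∫_t^{a*} γ(a)(ψ(t-a) - φ(t-a))da, defined on [0,a*], is not identically zero; in fact σ(α̲ + a*) > 0. -/
open MeasureTheory Real Set intervalIntegral

/-!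
Take `t = α̲ + a*`. The integrand `γ a * (ψ (t - a) - φ (t - a))` is nonnegative on `[t, a*]`,
so `σ t` dominates its integral over `[t - ᾱ, a*]`. There `t - a ∈ (α̲, ᾱ)`, so
`ψ - φ > 0`, and `∫_{t - ᾱ}^{a*} γ > 0` makes `γ` nonzero on a set of positive measure, where
the integrand is then positive.
-/

theorem integral_mul_pos_of_integral_pos {γ h : ℝ → ℝ} {c b : ℝ} (hcb : c ≤ b)
    (hγ : ∀ x ∈ Ioo c b, 0 ≤ γ x) (hh : ∀ x ∈ Ioo c b, 0 < h x)
    (hγh : IntervalIntegrable (fun x => γ x * h x) volume c b)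
    (hpos : 0 < ∫ x in c..b, γ x) : 0 < ∫ x in c..b, γ x * h x := by
  have hrestrict : volume.restrict (uIoc c b) = volume.restrict (Ioo c b) := by
    rw [uIoc_of_le hcb, Measure.restrict_congr_set Ioo_ae_eq_Ioc]
  have hγ_ae : 0 ≤ᵐ[volume.restrict (uIoc c b)] γ := by
    rw [hrestrict]
    exact ae_restrict_of_forall_mem measurableSet_Ioo hγ
  have hγh_ae : 0 ≤ᵐ[volume.restrict (uIoc c b)] fun x => γ x * h x := by
    rw [hrestrict]
    exact ae_restrict_of_forall_mem measurableSet_Ioo fun x hx => mul_nonneg (hγ x hx) (hh x hx).le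
  obtain ⟨hcb', hsupp⟩ := (integral_pos_iff_support_of_nonneg_ae' hγ_ae
    (intervalIntegrable_of_integral_ne_zero hpos.ne')).1 hpos
  refine (integral_pos_iff_support_of_nonneg_ae' hγh_ae hγh).2 ⟨hcb', hsupp.trans_le ?_⟩
  calc volume (Function.support γ ∩ Ioc c b)
      = volume (Function.support γ ∩ Ioo c b) :=
        measure_congr ((ae_eq_refl _).inter Ioo_ae_eq_Ioc.symm)
    _ ≤ volume (Function.support (fun x => γ x * h x) ∩ Ioc c b) := by
        refine measure_mono fun x ⟨hx, hxcb⟩ => ⟨?_, Ioo_subset_Ioc_self hxcb⟩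
        exact mul_ne_zero hx (hh x hxcb).ne'

theorem forcing_not_identically_zero_general
    (astar : ℝ)
    (γ : ℝ → ℝ) (hγint : IntegrableOn γ (Icc 0 astar)) (hγpos : ∀ a, 0 ≤ γ a)
    (hγtail : ∀ s : ℝ, s ∈ Ico 0 astar → 0 < ∫ a in s..astar, γ a)
    (φ ψ : ℝ → ℝ)
    (hφcont : ContinuousOn φ (Icc (-astar) 0)) (hψcont : ContinuousOn ψ (Icc (-astar) 0))
    (hle : ∀ s ∈ Icc (-astar) 0, φ s ≤ ψ s)
    (αlow αhigh : ℝ) (hαlt : αlow < αhigh)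
    (hsub : Ioo αlow αhigh ⊆ Ioo (-astar) 0)
    (hstrict : ∀ s ∈ Ioo αlow αhigh, φ s < ψ s)
    (σ : ℝ → ℝ)
    (hσ : ∀ t ∈ Icc 0 astar, σ t = ∫ a in t..astar, γ a * (ψ (t - a) - φ (t - a))) :
    0 < σ (αlow + astar) ∧ ¬ (∀ t ∈ Icc 0 astar, σ t = 0) := by
  obtain ⟨hαlow, hαhigh⟩ := (Ioo_subset_Ioo_iff hαlt).1 hsub
  set t := αlow + astar
  have ht : t ∈ Icc 0 astar := ⟨by linarith, by linarith⟩
  have hs : t - αhigh ∈ Ico 0 astar := ⟨by linarith, by linarith⟩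
  have hmaps : MapsTo (fun a => t - a) (Icc t astar) (Icc (-astar) 0) :=
    fun a ha => ⟨by linarith [ha.2], by linarith [ha.1, ht.1]⟩
  have hint : IntervalIntegrable (fun a => γ a * (ψ (t - a) - φ (t - a))) volume t astar := by
    refine (intervalIntegrable_iff_integrableOn_Icc_of_le ht.2).2 ?_
    refine (hγint.mono_set (Icc_subset_Icc_left ht.1)).mul_continuousOn ?_ isCompact_Icc
    exact (hψcont.comp (continuousOn_const.sub continuousOn_id) hmaps).sub
      (hφcont.comp (continuousOn_const.sub continuousOn_id) hmaps)
  have hpos : 0 < σ t := by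
    rw [hσ t ht]
    refine lt_of_lt_of_le ?_ (integral_mono_interval (by linarith) hs.2.le le_rfl ?_ hint)
    · refine integral_mul_pos_of_integral_pos hs.2.le (fun a _ => hγpos a) (fun a ha => ?_)
        (hint.mono_set ?_) (hγtail _ hs)
      · exact sub_pos.2 (hstrict _ ⟨by linarith [ha.2], by linarith [ha.1]⟩)
      · rw [uIcc_of_le hs.2.le, uIcc_of_le ht.2]
        exact Icc_subset_Icc_left (by linarith)
    · refine ae_restrict_of_forall_mem measurableSet_Ioc fun a ha => ?_
      exact mul_nonneg (hγpos a) (sub_nonneg.2 (hle _ (hmaps ⟨ha.1.le, ha.2⟩)))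
  exact ⟨hpos, fun h => hpos.ne' (h t ht)⟩

/-- the forcing term built from two ordered distinct histories is not
identically zero; it is positive at `α̲ + a*`. -/
theorem forcing_not_identically_zero
    (astar : ℝ) (hastar : 0 < astar)
    (γ : ℝ → ℝ) (hγint : IntegrableOn γ (Icc 0 astar)) (hγpos : ∀ a, 0 ≤ γ a)
    (hγtail : ∀ s : ℝ, s ∈ Ico 0 astar → 0 < ∫ a in s..astar, γ a)
    (φ ψ : ℝ → ℝ)
    (hφcont : ContinuousOn φ (Icc (-astar) 0)) (hψcont : ContinuousOn ψ (Icc (-astar) 0))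
    (hφpos : ∀ s ∈ Icc (-astar) 0, 0 ≤ φ s)
    (hle : ∀ s ∈ Icc (-astar) 0, φ s ≤ ψ s)
    (αlow αhigh : ℝ) (hαlt : αlow < αhigh)
    (hsub : Ioo αlow αhigh ⊆ Ioo (-astar) 0)
    (hstrict : ∀ s ∈ Ioo αlow αhigh, φ s < ψ s)
    (σ : ℝ → ℝ)
    (hσ : ∀ t ∈ Icc 0 astar, σ t = ∫ a in t..astar, γ a * (ψ (t - a) - φ (t - a))) :
    0 < σ (αlow + astar) ∧ ¬ (∀ t ∈ Icc 0 astar, σ t = 0) :=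
  forcing_not_identically_zero_general astar γ hγint hγpos hγtail φ ψ hφcont hψcont hle αlow αhigh
    hαlt hsub hstrict σ hσ
end

section
/- Let P, M ⊆ (0, a*) be measurable sets with Lebesgue measure |P| > 0 and |M ∩ (t, a*)| > 0 for every t ∈ (0, a*). Then the function h(t) = |P ∩ (M - t)| (Lebesgue measure of the intersection of P with M translated by -t) satisfies ∫₀^{a*} h(t)dt > 0; consequently h(t) > 0 for all t in a subset of (0, a*) of positive measure. -/
/-!
By Tonelli, `∫_{(0,a*]} |P ∩ (M - t)| dt = ∫_P |(M - s) ∩ (0, a*]| ds`. For `s ∈ P ⊆ (0, a*)` the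
set `(M - s) ∩ (0, a*]` is a translate of `M ∩ (s, s + a*] ⊇ M ∩ (s, a*)`, which has positive
measure, so the right-hand side is positive. A function with positive integral over a set is
positive on a subset of positive measure.
-/

open MeasureTheory Set
open scoped ENNReal

namespace MeasureTheory

variable {α : Type*} [MeasurableSpace α] {μ : Measure α}

theorem setLIntegral_pos_of_forall_pos {f : α → ℝ≥0∞} (hf : Measurable f) {s : Set α}
    (hs : 0 < μ s) (h : ∀ x ∈ s, 0 < f x) : 0 < ∫⁻ x in s, f x ∂μ :=
  (setLIntegral_pos_iff hf).2 <| hs.trans_le <| measure_mono fun x hx => ⟨(h x hx).ne', hx⟩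

theorem measure_setOf_pos_pos_of_setLIntegral_pos {f : α → ℝ≥0∞} {s : Set α}
    (hs : MeasurableSet s) (h : 0 < ∫⁻ x in s, f x ∂μ) : 0 < μ {x | x ∈ s ∧ 0 < f x} := by
  rw [pos_iff_ne_zero] at h ⊢
  contrapose! h
  refine (lintegral_congr_ae ?_).trans lintegral_zero
  rw [Filter.EventuallyEq, ae_restrict_iff' hs]
  refine measure_mono_null (fun x hx => ?_) h
  obtain ⟨hxs, hfx⟩ := Classical.not_imp.1 hx
  exact ⟨hxs, pos_iff_ne_zero.2 hfx⟩

variable {G : Type*} [MeasurableSpace G] [Add G] [MeasurableAdd₂ G]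

theorem measurable_measure_setOf_add_mem (ν : Measure G) [SFinite ν] {M : Set G}
    (hM : MeasurableSet M) : Measurable fun s => ν {t | s + t ∈ M} :=
  measurable_measure_prodMk_left (hM.preimage measurable_add)

theorem lintegral_measure_inter_setOf_add_mem (μ ν : Measure G) [SFinite μ] [SFinite ν]
    {P M : Set G} (hP : MeasurableSet P) (hM : MeasurableSet M) :
    ∫⁻ t, μ (P ∩ {s | s + t ∈ M}) ∂ν = ∫⁻ s in P, ν {t | s + t ∈ M} ∂μ := by
  set S : Set (G × G) := {p | p.2 ∈ P ∧ p.2 + p.1 ∈ M}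
  have hS : MeasurableSet S :=
    (measurable_snd hP).inter (hM.preimage (measurable_snd.add measurable_fst))
  calc ∫⁻ t, μ (P ∩ {s | s + t ∈ M}) ∂ν
      = ν.prod μ S := (Measure.prod_apply hS).symm
    _ = ∫⁻ s, P.indicator (fun s => ν {t | s + t ∈ M}) s ∂μ := by
      rw [Measure.prod_apply_symm hS]
      congr 1 with s
      by_cases hs : s ∈ P <;> simp [S, hs]
    _ = ∫⁻ s in P, ν {t | s + t ∈ M} ∂μ := lintegral_indicator hP _

end MeasureTheory

theorem Real.volume_setOf_add_mem_inter_Ioc (s a : ℝ) (M : Set ℝ) :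
    volume ({t | s + t ∈ M} ∩ Ioc 0 a) = volume (M ∩ Ioc s (s + a)) := by
  rw [← measure_preimage_add volume s (M ∩ Ioc s (s + a)), preimage_inter,
    preimage_const_add_Ioc, sub_self, add_sub_cancel_left]
  rfl

theorem translate_intersection_positive_general
    (astar : ℝ)
    (P M : Set ℝ) (hPmeas : MeasurableSet P) (hMmeas : MeasurableSet M)
    (hP : P ⊆ Ioo 0 astar)
    (hPpos : 0 < volume P)
    (hMpos : ∀ t : ℝ, t ∈ Ioo 0 astar → 0 < volume (M ∩ Ioo t astar)) :
    (0 < ∫⁻ t in Ioc (0:ℝ) astar, volume (P ∩ {s : ℝ | s + t ∈ M})) ∧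
    0 < volume {t : ℝ | t ∈ Ioo 0 astar ∧ 0 < volume (P ∩ {s : ℝ | s + t ∈ M})} := by
  have hslice : ∀ s ∈ P, 0 < volume.restrict (Ioc 0 astar) {t | s + t ∈ M} := fun s hs => by
    have hs' := hP hs
    rw [Measure.restrict_apply (show MeasurableSet {t | s + t ∈ M} from
        hMmeas.preimage (measurable_const_add s)),
      Real.volume_setOf_add_mem_inter_Ioc]
    exact (hMpos s hs').trans_le <| measure_mono <| inter_subset_inter_right M <|
      Ioo_subset_Ioc_self.trans <| Ioc_subset_Ioc_right <| by linarith [hs'.1]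
  have hintegral : 0 < ∫⁻ t in Ioc (0:ℝ) astar, volume (P ∩ {s : ℝ | s + t ∈ M}) := by
    rw [lintegral_measure_inter_setOf_add_mem _ _ hPmeas hMmeas]
    exact setLIntegral_pos_of_forall_pos (measurable_measure_setOf_add_mem _ hMmeas) hPpos hslice
  refine ⟨hintegral, measure_setOf_pos_pos_of_setLIntegral_pos measurableSet_Ioo ?_⟩
  rwa [setLIntegral_congr Ioo_ae_eq_Ioc]

/-- if `P` has positive measure and `M` meets every right tail of
`(0, a*)` in positive measure, then `h(t) = |P ∩ (M - t)|` has positive integral,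
and is positive on a set of positive measure. -/
theorem translate_intersection_positive
    (astar : ℝ) (hastar : 0 < astar)
    (P M : Set ℝ) (hPmeas : MeasurableSet P) (hMmeas : MeasurableSet M)
    (hP : P ⊆ Ioo 0 astar) (hM : M ⊆ Ioo 0 astar)
    (hPpos : 0 < volume P)
    (hMpos : ∀ t : ℝ, t ∈ Ioo 0 astar → 0 < volume (M ∩ Ioo t astar)) :
    (0 < ∫⁻ t in Ioc (0:ℝ) astar, volume (P ∩ {s : ℝ | s + t ∈ M})) ∧
    0 < volume {t : ℝ | t ∈ Ioo 0 astar ∧ 0 < volume (P ∩ {s : ℝ | s + t ∈ M})} :=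
  translate_intersection_positive_general astar P M hPmeas hMmeas hP hPpos hMpos
end

section
/- Let γ ∈ L¹₊(0,∞) be supported in [0,a*] with a* < ∞ and γ(a) ≤ β̄e^{-μ̲a}, and let f be Lipschitz with constant L. Let {φ_n} be a bounded sequence in C₊([-a*,0]) and b_n the continuous solutions of b_n(t) = f(∫₀^{a*}γ(a)b_n(t-a)da) with history φ_n, which are uniformly bounded on [0,a*] by some constant K. Then the family {b_n|_{[0,a*]}} is equicontinuous; consequently, the time-a* solution map φ ↦ b^φ_{a*} takes bounded subsets of the state space into relatively compact subsets of C([-a*,0]). -/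
/-!
For `0 ≤ t ≤ a*` the delay term only sees `b` on `[-a*, a*]`, where it is bounded by `K`, so
after the substitution `u = t - a` it is the convolution `∫ γ(t - u) c(u) du` of `γ` with a
function `|c| ≤ K`. Hence `|b(t) - b(s)| ≤ L K ‖γ(· + (t - s)) - γ‖₁` for all members of
the family at once, and continuity of translation in `L¹` turns this common modulus into
equicontinuity. Arzelà–Ascoli then gives a uniformly convergent subsequence.
-/

open MeasureTheory Real Set Filter Topology BoundedContinuousFunction
open scoped ENNReal

theorem MeasureTheory.Integrable.tendsto_integral_norm_comp_add_sub {E : Type*}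
    [NormedAddCommGroup E] {g : ℝ → E} (hg : Integrable g) :
    Tendsto (fun h => ∫ x, ‖g (x + h) - g x‖) (𝓝 0) (𝓝 0) := by
  have : Fact ((1 : ℝ≥0∞) ≠ ∞) := ⟨ENNReal.one_ne_top⟩
  have hcont : Continuous fun h : ℝ => DomAddAct.mk h +ᵥ hg.toL1 g := by fun_prop
  have hdist (h : ℝ) :
      dist (DomAddAct.mk h +ᵥ hg.toL1 g) (hg.toL1 g) = ∫ x, ‖g (x + h) - g x‖ := by
    rw [dist_eq_norm, L1.norm_eq_integral_norm]
    apply integral_congr_ae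
    filter_upwards [Lp.coeFn_sub (DomAddAct.mk h +ᵥ hg.toL1 g) (hg.toL1 g),
      DomAddAct.vadd_Lp_ae_eq (DomAddAct.mk h) (hg.toL1 g), hg.coeFn_toL1,
      (measurePreserving_add_left volume h).quasiMeasurePreserving.ae_eq_comp hg.coeFn_toL1]
      with x hsub hvadd hx hhx
    rw [hsub, Pi.sub_apply, hvadd, Equiv.symm_apply_apply, vadd_eq_add, hx, add_comm x]
    exact congrArg (‖· - g x‖) hhx
  simpa [hdist] using tendsto_iff_dist_tendsto_zero.1 (hcont.tendsto 0)

theorem dist_integral_comp_sub_mul_le {g c : ℝ → ℝ} {K : ℝ} (hg : Integrable g)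
    (hc : AEStronglyMeasurable c) (hcK : ∀ u, ‖c u‖ ≤ K) (t s : ℝ) :
    dist (∫ u, g (t - u) * c u) (∫ u, g (s - u) * c u) ≤ K * ∫ x, ‖g (x + (t - s)) - g x‖ := by
  have hint (t : ℝ) : Integrable fun u => g (t - u) * c u :=
    (hg.comp_sub_left t).mul_bdd hc (ae_of_all _ hcK)
  have hdiff : Integrable fun u => ‖g (t - u) - g (s - u)‖ :=
    ((hg.comp_sub_left t).sub (hg.comp_sub_left s)).norm
  calc dist (∫ u, g (t - u) * c u) (∫ u, g (s - u) * c u)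
      = ‖∫ u, (g (t - u) - g (s - u)) * c u‖ := by
        rw [dist_eq_norm, ← integral_sub (hint t) (hint s)]
        simp only [sub_mul]
    _ ≤ ∫ u, K * ‖g (t - u) - g (s - u)‖ := by
        refine norm_integral_le_of_norm_le (hdiff.const_mul K) (ae_of_all _ fun u => ?_)
        rw [norm_mul, mul_comm]
        exact mul_le_mul_of_nonneg_right (hcK u) (norm_nonneg _)
    _ = K * ∫ x, ‖g (x + (t - s)) - g x‖ := by
        rw [integral_const_mul, ← integral_sub_left_eq_self _ volume s]
        simp only [sub_sub_cancel]
        congr 2 with x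
        ring_nf

theorem intervalIntegral_mul_comp_sub_eq_integral_indicator {T t : ℝ} {γ b : ℝ → ℝ}
    (hγ : ∀ a ∉ Icc 0 T, γ a = 0) (ht : t ∈ Icc 0 T) :
    ∫ a in 0..T, γ a * b (t - a) = ∫ u, γ (t - u) * (Icc (-T) T).indicator b u := by
  have hT : 0 ≤ T := ht.1.trans ht.2
  calc ∫ a in 0..T, γ a * b (t - a)
      = ∫ a in 0..T, γ a * (Icc (-T) T).indicator b (t - a) := by
        refine intervalIntegral.integral_congr fun a ha => ?_
        rw [uIcc_of_le hT] at ha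
        have : t - a ∈ Icc (-T) T := ⟨by linarith [ha.2, ht.1], by linarith [ha.1, ht.2]⟩
        simp only [indicator_of_mem this]
    _ = ∫ a, γ a * (Icc (-T) T).indicator b (t - a) := by
        rw [intervalIntegral.integral_of_le hT, ← integral_Icc_eq_integral_Ioc]
        exact setIntegral_eq_integral_of_forall_compl_eq_zero fun a ha => by simp [hγ a ha]
    _ = ∫ u, γ (t - u) * (Icc (-T) T).indicator b u := by
        rw [← integral_sub_left_eq_self _ volume t]
        simp only [sub_sub_cancel]

theorem equicontinuousOn_of_dist_le_comp_sub {ι α E : Type*} [PseudoMetricSpace α]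
    [SeminormedAddCommGroup E] {F : ι → E → α} {s : Set E} {ω : E → ℝ}
    (hω : Tendsto ω (𝓝 0) (𝓝 0))
    (H : ∀ i, ∀ x ∈ s, ∀ y ∈ s, dist (F i x) (F i y) ≤ ω (x - y)) :
    EquicontinuousOn F s := by
  rw [← equicontinuous_restrict_iff]
  refine (Metric.uniformEquicontinuous_iff.2 fun ε hε => ?_).equicontinuous
  obtain ⟨δ, hδ, hωδ⟩ := Metric.tendsto_nhds_nhds.1 hω ε hε
  refine ⟨δ, hδ, fun x y hxy i => (H i x x.2 y y.2).trans_lt ?_⟩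
  have := hωδ (x := x - y) (by rwa [dist_zero_right, ← dist_eq_norm])
  exact (le_abs_self _).trans_lt (by rwa [Real.dist_0_eq_abs] at this)

theorem exists_strictMono_tendstoUniformlyOn_of_equicontinuousOn {X β : Type*}
    [TopologicalSpace X] [MetricSpace β] [Nonempty β] {s : Set X} (hs : IsCompact s)
    {F : ℕ → X → β} (hF : EquicontinuousOn F s) {t : Set β} (ht : IsCompact t)
    (hFt : ∀ n, ∀ x ∈ s, F n x ∈ t) :
    ∃ (g : X → β) (φ : ℕ → ℕ),
      StrictMono φ ∧ TendstoUniformlyOn (fun n => F (φ n)) g atTop s := by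
  have : CompactSpace s := isCompact_iff_compactSpace.mp hs
  rw [← equicontinuous_restrict_iff] at hF
  let G : ℕ → (s →ᵇ β) := fun n => .mkOfCompact ⟨s.domRestrict (F n), hF.continuous n⟩
  have hGequi : Equicontinuous ((↑) : range G → s → β) := by
    intro x U hU
    filter_upwards [hF x U hU] with y hy
    rintro ⟨_, n, rfl⟩
    exact hy n
  obtain ⟨g, -, φ, hφ, hlim⟩ :=
    (arzela_ascoli t ht _ (by rintro _ x ⟨n, rfl⟩; exact hFt n x x.2) hGequi).isSeqCompact
      (x := G) fun n => subset_closure (mem_range_self n)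
  refine ⟨Function.extend Subtype.val g (fun _ => Classical.arbitrary β), φ, hφ, ?_⟩
  rw [tendstoUniformlyOn_iff_tendstoUniformly_comp_coe, Function.extend_comp Subtype.val_injective]
  exact tendsto_iff_tendstoUniformly.1 hlim

theorem volterra_solutions_equicontinuous_general
    (astar : ℝ)
    (γ : ℝ → ℝ)
    (hγint : IntegrableOn γ (Ioi (0:ℝ)))
    (hγsupp : ∀ a : ℝ, a ∉ Icc (0:ℝ) astar → γ a = 0)
    (f : ℝ → ℝ) (L : NNReal) (hLip : LipschitzWith L f)
    (b : ℕ → ℝ → ℝ) (hbcont : ∀ n, Continuous (b n))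
    (K : ℝ)
    (hbbdd : ∀ n : ℕ, ∀ t ∈ Icc (-astar) astar, |b n t| ≤ K)
    (hbeq : ∀ n : ℕ, ∀ t : ℝ, 0 ≤ t →
      b n t = f (∫ a in (0:ℝ)..astar, γ a * b n (t - a))) :
    EquicontinuousOn (fun n : ℕ => b n) (Icc (0:ℝ) astar) ∧
    ∃ (g : ℝ → ℝ) (φ : ℕ → ℕ), StrictMono φ ∧
      TendstoUniformlyOn (fun n => b (φ n)) g atTop (Icc (0:ℝ) astar) := by
  have hγ : Integrable γ :=
    ((integrableOn_Icc_iff_integrableOn_Ioc).2 (hγint.mono_set Ioc_subset_Ioi_self)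
      ).integrable_of_forall_notMem_eq_zero hγsupp
  have hhistory (n : ℕ) (u : ℝ) : ‖(Icc (-astar) astar).indicator (b n) u‖ ≤ max K 0 := by
    rw [norm_indicator_eq_indicator_norm]
    exact indicator_apply_le' (fun hu => (hbbdd n u hu).trans (le_max_left _ _))
      fun _ => le_max_right _ _
  have hmodulus (n : ℕ) (t : ℝ) (ht : t ∈ Icc 0 astar) (s : ℝ) (hs : s ∈ Icc 0 astar) :
      dist (b n t) (b n s) ≤ L * (max K 0 * ∫ x, ‖γ (x + (t - s)) - γ x‖) := by
    rw [hbeq n t ht.1, hbeq n s hs.1,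
      intervalIntegral_mul_comp_sub_eq_integral_indicator hγsupp ht,
      intervalIntegral_mul_comp_sub_eq_integral_indicator hγsupp hs]
    refine (hLip.dist_le_mul _ _).trans (mul_le_mul_of_nonneg_left ?_ L.2)
    exact dist_integral_comp_sub_mul_le hγ
      ((hbcont n).measurable.indicator measurableSet_Icc).aestronglyMeasurable (hhistory n) t s
  have hequi : EquicontinuousOn (fun n : ℕ => b n) (Icc (0:ℝ) astar) :=
    equicontinuousOn_of_dist_le_comp_sub
      (by simpa using
        (hγ.tendsto_integral_norm_comp_add_sub.const_mul (max K 0)).const_mul (L : ℝ)) hmodulus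
  refine ⟨hequi, exists_strictMono_tendstoUniformlyOn_of_equicontinuousOn isCompact_Icc hequi
    (isCompact_Icc (a := -K) (b := K)) fun n t ht => abs_le.1 (hbbdd n t ?_)⟩
  exact ⟨by linarith [ht.1, ht.2], ht.2⟩

/-- equicontinuity of uniformly bounded solutions of the Volterra
equation, and relative compactness of the time-`a*` solution map. -/
theorem volterra_solutions_equicontinuous
    (astar : ℝ) (hastar : 0 < astar)
    (γ : ℝ → ℝ) (βbar μlow : ℝ) (hβbar : 0 < βbar) (hμlow : 0 < μlow)
    (hγmeas : Measurable γ) (hγpos : ∀ a, 0 ≤ γ a)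
    (hγint : IntegrableOn γ (Ioi (0:ℝ)))
    (hγsupp : ∀ a : ℝ, a ∉ Icc (0:ℝ) astar → γ a = 0)
    (hγbdd : ∀ a : ℝ, 0 ≤ a → γ a ≤ βbar * exp (-μlow * a))
    (f : ℝ → ℝ) (L : NNReal) (hLip : LipschitzWith L f)
    (b : ℕ → ℝ → ℝ) (hbcont : ∀ n, Continuous (b n))
    (K : ℝ)
    (hbbdd : ∀ n : ℕ, ∀ t ∈ Icc (-astar) astar, |b n t| ≤ K)
    (hbeq : ∀ n : ℕ, ∀ t : ℝ, 0 ≤ t →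
      b n t = f (∫ a in (0:ℝ)..astar, γ a * b n (t - a))) :
    EquicontinuousOn (fun n : ℕ => b n) (Icc (0:ℝ) astar) ∧
    ∃ (g : ℝ → ℝ) (φ : ℕ → ℕ), StrictMono φ ∧
      TendstoUniformlyOn (fun n => b (φ n)) g atTop (Icc (0:ℝ) astar) :=
  volterra_solutions_equicontinuous_general astar γ hγint hγsupp f L hLip b hbcont K hbbdd hbeq
end

section
/- There exists a monotone semiflow on L¹₊(0,∞) that is not strongly order-preserving: specifically, for the linear semiflow (U(t)u₀)(a) = e^{-∫_{a-t}^a μ(l)dl}u₀(a-t)·𝟙_{a≥t} (the pure transport-decay part), for any u₀ < v₀ in L¹₊ ∩ L^∞₊ and any open neighborhoods U ∋ u₀, V ∋ v₀ and any t ≥ 0, there exists ũ₀ ∈ U with U(t)ũ₀ ≰ U(t)v₀; indeed ũ₀ = u₀ + ε^{-1}𝟙_{(0,ε²)} works for ε sufficiently small (then ũ₀ ∈ U and ũ₀ > v₀ a.e. on (0,ε²), so U(t)ũ₀ > U(t)v₀ a.e. on (t, t+ε²)). -/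
open MeasureTheory Real Set

/-!
Adding to `u₀` the bump `ε⁻¹ 𝟙_(0, ε²)` costs only `ε` in `L¹`, yet for `ε⁻¹ > sup v₀` it puts the
perturbed datum strictly above `v₀` on `(0, ε²)`. The transport semiflow shifts data by `t` and
multiplies them by a positive survival factor, so the strict inequality reappears on `(t, t + ε²)`,
a set of positive measure.
-/

lemma integrable_const_mul_indicator_Ioo_one (c a b : ℝ) :
    Integrable (fun x => c * (Ioo a b).indicator 1 x) :=
  ((integrable_indicator_iff measurableSet_Ioo).2
    (integrableOn_const measure_Ioo_lt_top.ne)).const_mul c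

lemma setIntegral_Ioi_abs_const_mul_indicator_Ioo_one {c b : ℝ} (hc : 0 ≤ c) (hb : 0 ≤ b) :
    ∫ x in Ioi 0, |c * (Ioo 0 b).indicator 1 x| = c * b := by
  have habs : (fun x => |c * (Ioo 0 b).indicator 1 x|) = (Ioo 0 b).indicator fun _ => c := by
    ext x
    by_cases hx : x ∈ Ioo 0 b <;> simp [hx, abs_of_nonneg hc]
  rw [habs, setIntegral_indicator measurableSet_Ioo,
    inter_eq_self_of_subset_right Ioo_subset_Ioi_self, setIntegral_const, measureReal_def,
    Real.volume_Ioo, ENNReal.toReal_ofReal (by linarith), smul_eq_mul, sub_zero, mul_comm]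

lemma exists_pos_lt_lt_inv {δ : ℝ} (hδ : 0 < δ) (C : ℝ) : ∃ ε, 0 < ε ∧ ε < δ ∧ C < ε⁻¹ :=
  (((tendsto_inv_nhdsGT_zero.eventually_gt_atTop C).and (Ioo_mem_nhdsGT hδ)).exists).imp
    fun _ h => ⟨h.2.1, h.2.2, h.1⟩

lemma weighted_shift_lt_of_lt_on_Ioo {t η : ℝ} {k : ℝ → ℝ} (hk : ∀ a, 0 < k a)
    {U : (ℝ → ℝ) → ℝ → ℝ} (hU : ∀ w a, U w a = if t ≤ a then k a * w (a - t) else 0)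
    {w₁ w₂ : ℝ → ℝ} (hw : ∀ s ∈ Ioo 0 η, w₁ s < w₂ s) {a : ℝ} (ha : a ∈ Ioo t (t + η)) :
    U w₁ a < U w₂ a := by
  rw [hU, hU, if_pos ha.1.le, if_pos ha.1.le]
  exact mul_lt_mul_of_pos_left (hw _ ⟨by linarith [ha.1], by linarith [ha.2]⟩) (hk a)

theorem transport_semiflow_not_strongly_order_preserving_general
    (μ : ℝ → ℝ)
    (u₀ v₀ : ℝ → ℝ)
    (hu₀int : IntegrableOn u₀ (Ioi (0:ℝ)))
    (hu₀pos : ∀ a, 0 ≤ u₀ a)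
    (Cv : ℝ) (hv₀bdd : ∀ a, v₀ a ≤ Cv)
    (U : ℝ → (ℝ → ℝ) → (ℝ → ℝ))
    (hU : ∀ t : ℝ, ∀ w : ℝ → ℝ, ∀ a : ℝ,
      U t w a = if t ≤ a then exp (-∫ l in Ioc (a - t) a, μ l) * w (a - t) else 0) :
    ∀ δ : ℝ, 0 < δ → ∀ t : ℝ, 0 ≤ t →
      ∃ u' : ℝ → ℝ, IntegrableOn u' (Ioi (0:ℝ)) ∧ (∀ a, 0 ≤ u' a) ∧
        (∫ a in Ioi (0:ℝ), |u' a - u₀ a|) < δ ∧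
        (∃ ε : ℝ, 0 < ε ∧ u' = fun a => u₀ a + ε⁻¹ * (Ioo (0:ℝ) (ε^2)).indicator 1 a) ∧
        0 < volume {a : ℝ | a ∈ Ioi (0:ℝ) ∧ U t v₀ a < U t u' a} := by
  intro δ hδ t ht
  obtain ⟨ε, hε, hεδ, hCv⟩ := exists_pos_lt_lt_inv hδ Cv
  have hbump_nonneg : ∀ a, 0 ≤ ε⁻¹ * (Ioo (0:ℝ) (ε^2)).indicator 1 a := fun a =>
    mul_nonneg (inv_nonneg.2 hε.le) (indicator_nonneg (fun _ _ => zero_le_one) a)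
  refine ⟨fun a => u₀ a + ε⁻¹ * (Ioo (0:ℝ) (ε^2)).indicator 1 a,
    hu₀int.add (integrable_const_mul_indicator_Ioo_one _ _ _).integrableOn,
    fun a => add_nonneg (hu₀pos a) (hbump_nonneg a), ?_, ⟨ε, hε, rfl⟩, ?_⟩
  · simp only [add_sub_cancel_left]
    rw [setIntegral_Ioi_abs_const_mul_indicator_Ioo_one (inv_nonneg.2 hε.le) (sq_nonneg ε)]
    rwa [sq, inv_mul_cancel_left₀ hε.ne']
  · have hlt : ∀ s ∈ Ioo 0 (ε ^ 2),
        v₀ s < u₀ s + ε⁻¹ * (Ioo (0:ℝ) (ε^2)).indicator 1 s := fun s hs => by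
      rw [indicator_of_mem hs, Pi.one_apply, mul_one]
      linarith [hv₀bdd s, hu₀pos s]
    refine ((Measure.measure_Ioo_pos _).2 (lt_add_of_pos_right t (pow_pos hε 2))).trans_le
      (measure_mono fun a ha => ⟨ht.trans_lt ha.1, ?_⟩)
    exact weighted_shift_lt_of_lt_on_Ioo (fun _ => exp_pos _) (hU t) hlt ha

/-- the transport-decay semiflow on `L¹₊(0,∞)` is not strongly
order-preserving: arbitrarily close (in `L¹`) to `u₀` there are initial data whose
evolution is not below that of `v₀`. -/
theorem transport_semiflow_not_strongly_order_preserving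
    (μ : ℝ → ℝ) (μlow : ℝ) (hμlow : 0 < μlow)
    (hμmeas : Measurable μ) (hμbdd : ∃ C, ∀ a, |μ a| ≤ C)
    (hμlb : ∀ᵐ a : ℝ, a ∈ Ioi (0:ℝ) → μlow ≤ μ a)
    (u₀ v₀ : ℝ → ℝ)
    (hu₀int : IntegrableOn u₀ (Ioi (0:ℝ))) (hv₀int : IntegrableOn v₀ (Ioi (0:ℝ)))
    (hu₀pos : ∀ a, 0 ≤ u₀ a) (hv₀pos : ∀ a, 0 ≤ v₀ a)
    (Cu Cv : ℝ) (hu₀bdd : ∀ a, u₀ a ≤ Cu) (hv₀bdd : ∀ a, v₀ a ≤ Cv)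
    (hle : ∀ᵐ a : ℝ, a ∈ Ioi (0:ℝ) → u₀ a ≤ v₀ a)
    (hne : 0 < volume {a : ℝ | a ∈ Ioi (0:ℝ) ∧ u₀ a < v₀ a})
    (U : ℝ → (ℝ → ℝ) → (ℝ → ℝ))
    (hU : ∀ t : ℝ, ∀ w : ℝ → ℝ, ∀ a : ℝ,
      U t w a = if t ≤ a then exp (-∫ l in Ioc (a - t) a, μ l) * w (a - t) else 0) :
    ∀ δ : ℝ, 0 < δ → ∀ t : ℝ, 0 ≤ t →
      ∃ u' : ℝ → ℝ, IntegrableOn u' (Ioi (0:ℝ)) ∧ (∀ a, 0 ≤ u' a) ∧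
        (∫ a in Ioi (0:ℝ), |u' a - u₀ a|) < δ ∧
        (∃ ε : ℝ, 0 < ε ∧ u' = fun a => u₀ a + ε⁻¹ * (Ioo (0:ℝ) (ε^2)).indicator 1 a) ∧
        0 < volume {a : ℝ | a ∈ Ioi (0:ℝ) ∧ U t v₀ a < U t u' a} :=
  transport_semiflow_not_strongly_order_preserving_general μ u₀ v₀ hu₀int hu₀pos Cv hv₀bdd U hU
end
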